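/- arXiv:2210.03616 — 7 statements merged into one kernel-verified Lean document; each statement's English description precedes it below -/
import Mathlib

section
/- For integers k, ℓ ≥ 1 and r with 3 ≤ 2r+1 ≤ 2k+2ℓ-3, one has ∑_{i=0}^{2k-2} (-2)^{-i} · C(i+2ℓ-1, 2ℓ-1) · C(2r, i+2ℓ-1) = 2^{-(2r+1-2ℓ)} · C(2r, 2ℓ-1), where C(n,k) denotes the binomial coefficient (with C(n,k)=0 when k>n or k<0). -/
theorem binomial_identity_i (k ℓ r : ℕ) (hk : 1 ≤ k) (hl : 1 ≤ ℓ)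
    (h1 : 3 ≤ 2 * r + 1) (h2 : 2 * r + 1 ≤ 2 * k + 2 * ℓ - 3) :
    ∑ i ∈ Finset.range (2 * k - 1),
        ((-2 : ℚ)) ^ (-(i : ℤ)) * (Nat.choose (i + 2 * ℓ - 1) (2 * ℓ - 1) : ℚ) *
          (Nat.choose (2 * r) (i + 2 * ℓ - 1) : ℚ)
      = (2 : ℚ) ^ (2 * (ℓ : ℤ) - (2 * (r : ℤ) + 1)) * (Nat.choose (2 * r) (2 * ℓ - 1) : ℚ) := by
  rcases lt_or_ge (2 * r) (2 * ℓ - 1) with hc | hc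
  · rw [Nat.choose_eq_zero_of_lt hc]
    rw [Finset.sum_eq_zero, Nat.cast_zero, mul_zero]
    intro i hi
    rw [Nat.choose_eq_zero_of_lt (show 2 * r < i + 2 * ℓ - 1 by omega), Nat.cast_zero, mul_zero]
  · set m := 2 * r - (2 * ℓ - 1) with hm
    have key : ∀ i, (Nat.choose (i + 2 * ℓ - 1) (2 * ℓ - 1) : ℚ) *
        (Nat.choose (2 * r) (i + 2 * ℓ - 1) : ℚ)
        = (Nat.choose (2 * r) (2 * ℓ - 1) : ℚ) * (Nat.choose m i : ℚ) := by
      intro i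
      have hi1 : i + 2 * ℓ - 1 = i + (2 * ℓ - 1) := by omega
      rcases le_or_gt (i + 2 * ℓ - 1) (2 * r) with h | h
      · have := Nat.choose_mul (n := 2 * r) (k := i + 2 * ℓ - 1) (s := 2 * ℓ - 1) (by omega)
        have h2' : i + 2 * ℓ - 1 - (2 * ℓ - 1) = i := by omega
        rw [h2'] at this
        rw [mul_comm, ← Nat.cast_mul, this, hm, Nat.cast_mul]
      · rw [Nat.choose_eq_zero_of_lt h, Nat.choose_eq_zero_of_lt (show m < i by omega)]
        push_cast; ring
    have hzpow : ∀ i : ℕ, ((-2 : ℚ)) ^ (-(i : ℤ)) = (-(1/2) : ℚ) ^ i := by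
      intro i
      rw [zpow_neg, zpow_natCast, ← inv_pow]
      norm_num
    calc ∑ i ∈ Finset.range (2 * k - 1),
          ((-2 : ℚ)) ^ (-(i : ℤ)) * (Nat.choose (i + 2 * ℓ - 1) (2 * ℓ - 1) : ℚ) *
            (Nat.choose (2 * r) (i + 2 * ℓ - 1) : ℚ)
        = ∑ i ∈ Finset.range (2 * k - 1),
            (Nat.choose (2 * r) (2 * ℓ - 1) : ℚ) * ((-(1/2) : ℚ) ^ i * (Nat.choose m i : ℚ)) := by
          refine Finset.sum_congr rfl fun i _ => ?_
          rw [mul_assoc, key i, hzpow i]; ring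
      _ = (Nat.choose (2 * r) (2 * ℓ - 1) : ℚ) *
            ∑ i ∈ Finset.range (m + 1), (-(1/2) : ℚ) ^ i * (Nat.choose m i : ℚ) := by
          rw [← Finset.mul_sum]
          congr 1
          refine (Finset.sum_subset (Finset.range_subset_range.2 (by omega)) ?_).symm
          intro i _ hi
          rw [Nat.choose_eq_zero_of_lt (by simp at hi ⊢; omega), Nat.cast_zero, mul_zero]
      _ = (Nat.choose (2 * r) (2 * ℓ - 1) : ℚ) * ((-(1/2) : ℚ) + 1) ^ m := by
          rw [add_pow]
          congr 1
          refine Finset.sum_congr rfl fun i _ => ?_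
          ring
      _ = (2 : ℚ) ^ (2 * (ℓ : ℤ) - (2 * (r : ℤ) + 1)) * (Nat.choose (2 * r) (2 * ℓ - 1) : ℚ) := by
          rw [mul_comm]
          congr 1
          have : (-(1/2) : ℚ) + 1 = (1/2 : ℚ) := by norm_num
          rw [this]
          have hexp : 2 * (ℓ : ℤ) - (2 * (r : ℤ) + 1) = -(m : ℤ) := by
            simp only [hm]; push_cast [Nat.cast_sub (by omega : 2 * ℓ - 1 ≤ 2 * r)]; omega
          rw [hexp, zpow_neg, zpow_natCast, one_div, inv_pow]
end

section
/- For integers k, ℓ ≥ 1 and r with 3 ≤ 2r+1 ≤ 2k+2ℓ-3, the quantity ∑_{i=0}^{2ℓ-2} (-2)^{-i-2k} · C(i+2k-1, 2k-1) · C(2r, 2ℓ-i-1) is symmetric under exchanging k and ℓ; that is, it equals ∑_{i=0}^{2k-2} (-2)^{-i-2ℓ} · C(i+2ℓ-1, 2ℓ-1) · C(2r, 2k-i-1). -/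
open Polynomial Finset

lemma reflect_one_X_add_one : reflect 1 ((X:ℚ[X]) + 1) = X + 1 := by
  ext i
  rw [coeff_reflect]
  match i with
  | 0 => simp [coeff_one]
  | 1 => simp [coeff_one]
  | (n+2) => rw [revAt_eq_self_of_lt (by omega)]

lemma reflect_one_X_sub_one : reflect 1 ((X:ℚ[X]) - 1) = 1 - X := by
  ext i
  rw [coeff_reflect]
  match i with
  | 0 => simp [coeff_one]
  | 1 => simp [coeff_one]
  | (n+2) => rw [revAt_eq_self_of_lt (by omega)]; simp [coeff_one, coeff_X]

lemma reflect_pow_aux (p q : ℚ[X]) (hp : p.natDegree ≤ 1) (hq : reflect 1 p = q) (n : ℕ) :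
    reflect n (p ^ n) = q ^ n := by
  induction n with
  | zero => simp [reflect_one]
  | succ n ih =>
    have hdeg : (p ^ n).natDegree ≤ n := by
      calc (p ^ n).natDegree ≤ n * p.natDegree := natDegree_pow_le
      _ ≤ n * 1 := Nat.mul_le_mul_left n hp
      _ = n := by omega
    rw [pow_succ, reflect_mul _ _ hdeg hp, ih, hq, pow_succ]

lemma palindrome (a b m : ℕ) (hb : Even b) (hm : m ≤ a + b) :
    ((X+1:ℚ[X])^a * (X-1)^b).coeff m = ((X+1:ℚ[X])^a * (X-1)^b).coeff (a + b - m) := by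
  have da : ((X+1:ℚ[X])^a).natDegree ≤ a := by
    calc ((X+1:ℚ[X])^a).natDegree ≤ a * (X+1:ℚ[X]).natDegree := natDegree_pow_le
    _ ≤ a * 1 := Nat.mul_le_mul_left a (by simpa using (natDegree_X_add_C (1:ℚ)).le)
    _ = a := by omega
  have db : ((X-1:ℚ[X])^b).natDegree ≤ b := by
    calc ((X-1:ℚ[X])^b).natDegree ≤ b * (X-1:ℚ[X]).natDegree := natDegree_pow_le
    _ ≤ b * 1 := Nat.mul_le_mul_left b (by
      simpa using natDegree_X_sub_C_le (1:ℚ))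
    _ = b := by omega
  have hrefl : reflect (a+b) ((X+1:ℚ[X])^a * (X-1)^b) = (X+1:ℚ[X])^a * (X-1)^b := by
    rw [reflect_mul _ _ da db, reflect_pow_aux (X+1) (X+1) (by simpa using (natDegree_X_add_C (1:ℚ)).le) reflect_one_X_add_one,
      reflect_pow_aux (X-1) (1-X) (by simpa using natDegree_X_sub_C_le (1:ℚ)) reflect_one_X_sub_one]
    rw [show (1 - X : ℚ[X]) = -(X-1) by ring, hb.neg_pow]
  conv_lhs => rw [← hrefl]
  rw [coeff_reflect, revAt_le hm]

lemma coeff_form (a b m : ℕ) :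
    ((X+1:ℚ[X])^a * (X-1)^b).coeff m
      = ∑ j ∈ range (b+1), (-2:ℚ)^j * (b.choose j : ℚ) * ((a + b - j).choose m : ℚ) := by
  have h1 : ((X:ℚ[X]) - 1)^b
      = ∑ j ∈ range (b+1), (-2:ℚ[X])^j * (X+1)^(b-j) * (b.choose j : ℚ[X]) := by
    rw [show ((X:ℚ[X]) - 1) = (-2) + (X+1) by ring, add_pow]
  rw [h1, Finset.mul_sum, finset_sum_coeff]
  refine Finset.sum_congr rfl fun j hj => ?_
  have hj' : j ≤ b := Nat.lt_succ_iff.mp (Finset.mem_range.mp hj)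
  have key : (X+1:ℚ[X])^a * ((-2:ℚ[X])^j * (X+1)^(b-j) * (b.choose j : ℚ[X]))
      = C ((-2:ℚ)^j * (b.choose j : ℚ)) * (X+1)^(a+b-j) := by
    rw [show a + b - j = a + (b-j) by omega, pow_add]
    simp only [map_mul, map_pow, map_neg, map_ofNat, Polynomial.C_eq_natCast]
    ring
  rw [key, coeff_C_mul, coeff_X_add_one_pow ℚ]

lemma T_symm (N r m : ℕ) (hr : 2*r ≤ N) (hm : m ≤ N) :
    ∑ j ∈ range (N+1), (-2:ℚ)^j * ((2*r).choose j : ℚ) * ((N-j).choose m : ℚ)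
      = ∑ j ∈ range (N+1), (-2:ℚ)^j * ((2*r).choose j : ℚ) * ((N-j).choose (N-m) : ℚ) := by
  have shrink : ∀ s : ℕ, ∑ j ∈ range (N+1), (-2:ℚ)^j * ((2*r).choose j : ℚ) * ((N-j).choose s : ℚ)
      = ∑ j ∈ range (2*r+1), (-2:ℚ)^j * ((2*r).choose j : ℚ) * ((N-j).choose s : ℚ) := by
    intro s
    refine (Finset.sum_subset (Finset.range_subset_range.mpr (by omega)) fun j hj hj2 => ?_).symm
    have h2r : 2*r < j := by simp only [Finset.mem_range] at hj hj2; omega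
    rw [Nat.choose_eq_zero_of_lt h2r]
    simp
  have hc : ∀ s, ((X+1:ℚ[X])^(N-2*r) * (X-1)^(2*r)).coeff s
      = ∑ j ∈ range (2*r+1), (-2:ℚ)^j * ((2*r).choose j : ℚ) * ((N-j).choose s : ℚ) := by
    intro s
    have h := coeff_form (N-2*r) (2*r) s
    rw [show N-2*r+2*r = N from by omega] at h
    exact h
  rw [shrink, shrink, ← hc, ← hc]
  have h := palindrome (N-2*r) (2*r) m (even_two_mul r) (by omega)
  rw [show N-2*r+2*r = N from by omega] at h
  exact h

lemma side (k ℓ r : ℕ) (hk : 1 ≤ k) (hl : 1 ≤ ℓ) :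
    ∑ i ∈ Finset.range (2 * ℓ - 1),
        ((-2 : ℚ)) ^ (-(i : ℤ) - 2 * (k : ℤ)) * (Nat.choose (i + 2 * k - 1) (2 * k - 1) : ℚ) *
          (Nat.choose (2 * r) (2 * ℓ - i - 1) : ℚ)
      = (-2:ℚ) ^ (-(2*(k:ℤ)+2*(ℓ:ℤ)-1)) *
        ((∑ j ∈ range (2*k+2*ℓ-1), (-2:ℚ)^j * ((2*r).choose j : ℚ) * ((2*k+2*ℓ-2-j).choose (2*k-1) : ℚ))
          - ((2*k+2*ℓ-2).choose (2*k-1) : ℚ)) := by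
  have hA : ∑ j ∈ range (2*k+2*ℓ-1), (-2:ℚ)^j * ((2*r).choose j : ℚ) * ((2*k+2*ℓ-2-j).choose (2*k-1) : ℚ)
      = ∑ j ∈ range (2*ℓ), (-2:ℚ)^j * ((2*r).choose j : ℚ) * ((2*k+2*ℓ-2-j).choose (2*k-1) : ℚ) := by
    refine (Finset.sum_subset (Finset.range_subset_range.mpr (by omega)) fun j hj hj2 => ?_).symm
    have hjl : 2*ℓ ≤ j := by simpa using hj2
    rw [Nat.choose_eq_zero_of_lt (show 2*k+2*ℓ-2-j < 2*k-1 by omega)]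
    simp
  have hB : ∑ j ∈ range (2*ℓ), (-2:ℚ)^j * ((2*r).choose j : ℚ) * ((2*k+2*ℓ-2-j).choose (2*k-1) : ℚ)
      = (∑ i ∈ range (2*ℓ-1), (-2:ℚ)^(i+1) * ((2*r).choose (i+1) : ℚ) * ((2*k+2*ℓ-2-(i+1)).choose (2*k-1) : ℚ))
        + ((2*k+2*ℓ-2).choose (2*k-1) : ℚ) := by
    rw [show 2*ℓ = (2*ℓ-1)+1 by omega, Finset.sum_range_succ']
    simp
  rw [hA, hB]
  rw [add_sub_cancel_right, Finset.mul_sum]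
  rw [← Finset.sum_range_reflect]
  refine Finset.sum_congr rfl fun i hi => ?_
  have hi' : i < 2*ℓ-1 := Finset.mem_range.mp hi
  rw [show 2*ℓ-1-1-i + 2*k - 1 = 2*k+2*ℓ-2-(i+1) by omega,
      show 2*ℓ - (2*ℓ-1-1-i) - 1 = i+1 by omega,
      show (-((2*ℓ-1-1-i : ℕ) : ℤ) - 2*(k:ℤ)) = (((i+1:ℕ):ℤ)) + (-(2*(k:ℤ)+2*(ℓ:ℤ)-1)) by omega,
      zpow_add₀ (by norm_num : (-2:ℚ) ≠ 0), zpow_natCast]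
  ring

theorem binomial_identity_ii (k ℓ r : ℕ) (hk : 1 ≤ k) (hl : 1 ≤ ℓ)
    (h1 : 3 ≤ 2 * r + 1) (h2 : 2 * r + 1 ≤ 2 * k + 2 * ℓ - 3) :
    ∑ i ∈ Finset.range (2 * ℓ - 1),
        ((-2 : ℚ)) ^ (-(i : ℤ) - 2 * (k : ℤ)) * (Nat.choose (i + 2 * k - 1) (2 * k - 1) : ℚ) *
          (Nat.choose (2 * r) (2 * ℓ - i - 1) : ℚ)
      = ∑ i ∈ Finset.range (2 * k - 1),
        ((-2 : ℚ)) ^ (-(i : ℤ) - 2 * (ℓ : ℤ)) * (Nat.choose (i + 2 * ℓ - 1) (2 * ℓ - 1) : ℚ) *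
          (Nat.choose (2 * r) (2 * k - i - 1) : ℚ) := by
  rw [side k ℓ r hk hl, side ℓ k r hl hk]
  rw [show (-(2*(ℓ:ℤ)+2*(k:ℤ)-1)) = (-(2*(k:ℤ)+2*(ℓ:ℤ)-1)) by ring,
      show 2*ℓ+2*k-1 = 2*k+2*ℓ-1 by omega,
      show 2*ℓ+2*k-2 = 2*k+2*ℓ-2 by omega]
  have hsym : ((2*k+2*ℓ-2).choose (2*k-1) : ℚ) = ((2*k+2*ℓ-2).choose (2*ℓ-1) : ℚ) := by
    rw [show 2*ℓ-1 = (2*k+2*ℓ-2) - (2*k-1) by omega, Nat.choose_symm (by omega)]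
  have hT := T_symm (2*k+2*ℓ-2) r (2*k-1) (by omega) (by omega)
  rw [show (2*k+2*ℓ-2) - (2*k-1) = 2*ℓ-1 by omega, show 2*k+2*ℓ-2+1 = 2*k+2*ℓ-1 by omega] at hT
  rw [hT, hsym]
end

section
/- The generating series of the multiple zeta values ζ({2}^n) satisfies ∑_{n≥0} ζ({2}^n) x^{2n} = sin(πx)/(πx) evaluated at ix, i.e. ∑_{n≥0} ζ({2}^n) x^{2n} = sinh(πx)/(πx) for real x; equivalently ζ({2}^n) = π^{2n}/(2n+1)!. -/
open Finset Filter Topology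
open scoped Nat ENNReal

/-- The multiple zeta value ζ({2}^n) = ∑_{0<n₁<⋯<n_n} 1/(n₁²⋯n_n²). -/
noncomputable def zetaTwos (n : ℕ) : ℝ :=
  ∑' f : {f : Fin n → ℕ // StrictMono f ∧ ∀ i, 0 < f i}, ∏ i, (1 : ℝ) / ((f.1 i : ℝ)) ^ 2

namespace ZetaTwosAux

set_option maxHeartbeats 1000000

lemma coeff_ext {a b : ℕ → ℝ} (ha : ∀ n, 0 ≤ a n) (hb : ∀ n, 0 ≤ b n)
    (hsum : ∀ t : ℝ, t ∈ Set.Ioc (0:ℝ) 2⁻¹ →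
      Summable (fun n => a n * t ^ n) ∧ Summable (fun n => b n * t ^ n) ∧
      (∑' n, a n * t ^ n) = ∑' n, b n * t ^ n) :
    ∀ n, a n = b n := by
  have hhalf : (2:ℝ)⁻¹ ∈ Set.Ioc (0:ℝ) 2⁻¹ := ⟨by norm_num, le_refl _⟩
  have shift : ∀ (c : ℕ → ℝ) (m : ℕ) (t : ℝ), t ∈ Set.Ioc (0:ℝ) 2⁻¹ →
      Summable (fun k => c k * t ^ k) → Summable (fun k => c (k + m) * t ^ k) := by
    intro c m t ht hc
    have h1 : Summable (fun k => c (k + m) * t ^ (k + m)) := (summable_nat_add_iff m).2 hc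
    have h2 : (fun k => c (k + m) * t ^ (k + m)) = fun k => t ^ m * (c (k + m) * t ^ k) := by
      funext k; rw [pow_add]; ring
    rw [h2] at h1
    exact (summable_mul_left_iff (pow_ne_zero m ht.1.ne')).1 h1
  intro n
  induction n using Nat.strong_induction_on with
  | _ n IH =>
  obtain ⟨Ca, hCa⟩ : ∃ C, C = ∑' k, a (k + (n+1)) * (2:ℝ)⁻¹ ^ k := ⟨_, rfl⟩
  obtain ⟨Cb, hCb⟩ : ∃ C, C = ∑' k, b (k + (n+1)) * (2:ℝ)⁻¹ ^ k := ⟨_, rfl⟩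
  have hCa0 : 0 ≤ Ca := hCa ▸ tsum_nonneg fun k => mul_nonneg (ha _) (by positivity)
  have hCb0 : 0 ≤ Cb := hCb ▸ tsum_nonneg fun k => mul_nonneg (hb _) (by positivity)
  have key : ∀ t : ℝ, t ∈ Set.Ioc (0:ℝ) 2⁻¹ → |a n - b n| ≤ t * (Ca + Cb) := by
    intro t ht
    obtain ⟨hsa, hsb, heq⟩ := hsum t ht
    have hsa' := shift a n t ht hsa
    have hsb' := shift b n t ht hsb
    have tail_eq : (∑' k, a (k + n) * t ^ k) = ∑' k, b (k + n) * t ^ k := by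
      have e1 := Summable.sum_add_tsum_nat_add n hsa
      have e2 := Summable.sum_add_tsum_nat_add n hsb
      have efin : (∑ i ∈ Finset.range n, a i * t ^ i) = ∑ i ∈ Finset.range n, b i * t ^ i :=
        Finset.sum_congr rfl fun i hi => by rw [IH i (Finset.mem_range.1 hi)]
      have e3 : (∑' k, a (k + n) * t ^ (k + n)) = ∑' k, b (k + n) * t ^ (k + n) := by
        linarith [e1, e2, efin, heq]
      have haf : (fun k => a (k + n) * t ^ (k + n)) = fun k => t ^ n * (a (k + n) * t ^ k) := by
        funext k; rw [pow_add]; ring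
      have hbf : (fun k => b (k + n) * t ^ (k + n)) = fun k => t ^ n * (b (k + n) * t ^ k) := by
        funext k; rw [pow_add]; ring
      rw [haf, hbf, tsum_mul_left, tsum_mul_left] at e3
      exact mul_left_cancel₀ (pow_ne_zero n ht.1.ne') e3
    have expand : ∀ (c : ℕ → ℝ), Summable (fun k => c (k + n) * t ^ k) →
        (∑' k, c (k + n) * t ^ k) = c n + t * ∑' k, c (k + (n+1)) * t ^ k := by
      intro c hc
      have e := Summable.sum_add_tsum_nat_add (f := fun k => c (k + n) * t ^ k) 1 hc
      rw [Finset.sum_range_one] at e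
      simp only [pow_zero, mul_one, zero_add] at e
      have h2 : (fun k => c (k + 1 + n) * t ^ (k + 1)) = fun k => t * (c (k + (n+1)) * t ^ k) := by
        funext k
        rw [pow_add, pow_one, show k + 1 + n = k + (n+1) by omega]; ring
      rw [← e, h2, tsum_mul_left]
    have ea := expand a hsa'
    have eb := expand b hsb'
    have bndA : (∑' k, a (k + (n+1)) * t ^ k) ≤ Ca := by
      rw [hCa]
      refine Summable.tsum_le_tsum (fun k => ?_) (shift a (n+1) t ht hsa)
        (shift a (n+1) 2⁻¹ hhalf ((hsum _ hhalf).1))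
      exact mul_le_mul_of_nonneg_left (pow_le_pow_left₀ ht.1.le ht.2 k) (ha _)
    have bndB : (∑' k, b (k + (n+1)) * t ^ k) ≤ Cb := by
      rw [hCb]
      refine Summable.tsum_le_tsum (fun k => ?_) (shift b (n+1) t ht hsb)
        (shift b (n+1) 2⁻¹ hhalf ((hsum _ hhalf).2.1))
      exact mul_le_mul_of_nonneg_left (pow_le_pow_left₀ ht.1.le ht.2 k) (hb _)
    have posA : 0 ≤ ∑' k, a (k + (n+1)) * t ^ k :=
      tsum_nonneg fun k => mul_nonneg (ha _) (le_of_lt (pow_pos ht.1 k))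
    have posB : 0 ≤ ∑' k, b (k + (n+1)) * t ^ k :=
      tsum_nonneg fun k => mul_nonneg (hb _) (le_of_lt (pow_pos ht.1 k))
    obtain ⟨A, hA⟩ : ∃ A, A = ∑' k, a (k + (n+1)) * t ^ k := ⟨_, rfl⟩
    obtain ⟨B, hB⟩ : ∃ B, B = ∑' k, b (k + (n+1)) * t ^ k := ⟨_, rfl⟩
    rw [← hA] at ea bndA posA
    rw [← hB] at eb bndB posB
    have hd : a n - b n = t * (B - A) := by rw [ea, eb] at tail_eq; linarith
    rw [hd, abs_mul, abs_of_pos ht.1]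
    have habs : |B - A| ≤ Ca + Cb := by rw [abs_sub_le_iff]; constructor <;> linarith
    exact mul_le_mul_of_nonneg_left habs ht.1.le
  by_contra hne
  have hpos : 0 < |a n - b n| := abs_pos.2 (sub_ne_zero.2 hne)
  obtain ⟨t, ht, ht2⟩ : ∃ t, t ∈ Set.Ioc (0:ℝ) 2⁻¹ ∧ t * (Ca + Cb) < |a n - b n| := by
    refine ⟨min 2⁻¹ (|a n - b n| / (2 * (Ca + Cb + 1))), ⟨lt_min (by norm_num) (by positivity),
      min_le_left _ _⟩, ?_⟩
    have h2 : min 2⁻¹ (|a n - b n| / (2 * (Ca + Cb + 1))) * (Ca + Cb) ≤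
        (|a n - b n| / (2 * (Ca + Cb + 1))) * (Ca + Cb) :=
      mul_le_mul_of_nonneg_right (min_le_right _ _) (by linarith)
    have h3 : (|a n - b n| / (2 * (Ca + Cb + 1))) * (Ca + Cb) < |a n - b n| := by
      rw [div_mul_eq_mul_div, div_lt_iff₀ (by linarith)]
      nlinarith
    linarith
  linarith [key t ht]

noncomputable def wt {n : ℕ} (f : {f : Fin n → ℕ // StrictMono f ∧ ∀ i, 0 < f i}) : ℝ≥0∞ :=
  ENNReal.ofReal (∏ i, (1:ℝ) / ((f.1 i : ℝ)) ^ 2)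

noncomputable def c (n N : ℕ) : ℝ :=
  ∑ S ∈ powersetCard n (Icc 1 N), ∏ k ∈ S, 1 / (k:ℝ) ^ 2

lemma c_nonneg (n N : ℕ) : 0 ≤ c n N :=
  Finset.sum_nonneg fun S _ => Finset.prod_nonneg fun k _ => by positivity

lemma bdd_finite (n N : ℕ) :
    Set.Finite {f : {f : Fin n → ℕ // StrictMono f ∧ ∀ i, 0 < f i} | ∀ i, f.1 i ≤ N} := by
  have h : Set.Finite {g : Fin n → ℕ | ∀ i, g i ≤ N} := by
    have := Set.Finite.pi (fun _ : Fin n => Set.finite_Iic N)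
    convert this using 1
    ext g
    simp [Set.mem_pi, Set.mem_Iic, Pi.le_def]
  have hsub : {f : {f : Fin n → ℕ // StrictMono f ∧ ∀ i, 0 < f i} | ∀ i, f.1 i ≤ N} ⊆
      Subtype.val ⁻¹' {g : Fin n → ℕ | ∀ i, g i ≤ N} := fun f hf => hf
  exact Set.Finite.subset (Set.Finite.preimage Subtype.val_injective.injOn h) hsub

noncomputable def bset (n N : ℕ) : Finset {f : Fin n → ℕ // StrictMono f ∧ ∀ i, 0 < f i} :=
  (bdd_finite n N).toFinset

noncomputable def ofFinset {n : ℕ} (S : Finset ℕ) (hcard : S.card = n)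
    (hpos : ∀ k ∈ S, 0 < k) : {f : Fin n → ℕ // StrictMono f ∧ ∀ i, 0 < f i} :=
  ⟨fun i => S.orderEmbOfFin hcard i, (S.orderEmbOfFin hcard).strictMono,
   fun i => hpos _ (S.orderEmbOfFin_mem hcard i)⟩

lemma image_ofFinset {n : ℕ} (S : Finset ℕ) (hcard : S.card = n) (hpos : ∀ k ∈ S, 0 < k) :
    Finset.image ((ofFinset S hcard hpos).1) univ = S := by
  apply Finset.coe_injective
  rw [Finset.coe_image, Finset.coe_univ, Set.image_univ]
  exact S.range_orderEmbOfFin hcard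

lemma mem_Icc_pos {n N : ℕ} {S : Finset ℕ} (hS : S ∈ powersetCard n (Icc 1 N)) :
    ∀ k ∈ S, 0 < k := fun k hk =>
  lt_of_lt_of_le Nat.zero_lt_one (Finset.mem_Icc.1 ((mem_powersetCard.1 hS).1 hk)).1

lemma sum_bset (n N : ℕ) : ∑ f ∈ bset n N, wt f = ENNReal.ofReal (c n N) := by
  rw [c, ENNReal.ofReal_sum_of_nonneg (fun S _ => Finset.prod_nonneg fun k _ => by positivity)]
  symm
  refine Finset.sum_bij
    (fun S hS => ofFinset S (mem_powersetCard.1 hS).2 (mem_Icc_pos hS)) ?hi ?inj ?surj ?val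
  case hi =>
    intro S hS
    rw [bset, Set.Finite.mem_toFinset]
    intro i
    exact (Finset.mem_Icc.1 ((mem_powersetCard.1 hS).1
      (S.orderEmbOfFin_mem (mem_powersetCard.1 hS).2 i))).2
  case inj =>
    intro S hS S' hS' heq
    have h1 := image_ofFinset S (mem_powersetCard.1 hS).2 (mem_Icc_pos hS)
    have h2 := image_ofFinset S' (mem_powersetCard.1 hS').2 (mem_Icc_pos hS')
    rw [← h1, ← h2]
    exact congrArg (fun g => Finset.image (g.1) univ) heq
  case surj =>
    intro f hf
    have hboundf : ∀ i, f.1 i ≤ N := by rwa [bset, Set.Finite.mem_toFinset] at hf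
    refine ⟨Finset.image f.1 univ, ?_, ?_⟩
    · rw [mem_powersetCard]
      constructor
      · intro k hk
        obtain ⟨i, _, rfl⟩ := Finset.mem_image.1 hk
        exact Finset.mem_Icc.2 ⟨f.2.2 i, hboundf i⟩
      · rw [Finset.card_image_of_injective _ f.2.1.injective, card_univ, Fintype.card_fin]
    · apply Subtype.ext
      symm
      apply Finset.orderEmbOfFin_unique
      · intro i
        exact Finset.mem_image_of_mem _ (Finset.mem_univ i)
      · exact f.2.1
  case val =>
    intro S hS
    show ENNReal.ofReal (∏ k ∈ S, 1 / (k:ℝ) ^ 2) =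
      wt (ofFinset S (mem_powersetCard.1 hS).2 (mem_Icc_pos hS))
    rw [wt]
    congr 1
    have hinj := (ofFinset S (mem_powersetCard.1 hS).2 (mem_Icc_pos hS)).2.1.injective
    have hpi := Finset.prod_image (f := fun k : ℕ => (1:ℝ) / (k:ℝ) ^ 2)
      (g := (ofFinset S (mem_powersetCard.1 hS).2 (mem_Icc_pos hS)).1) (s := univ)
      (fun i _ j _ h => hinj h)
    rw [image_ofFinset] at hpi
    rw [← hpi]

noncomputable def Z (n : ℕ) : ℝ≥0∞ :=
  ∑' f : {f : Fin n → ℕ // StrictMono f ∧ ∀ i, 0 < f i}, wt f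

lemma Ztsum (n : ℕ) :
    Z n = ⨆ N, ENNReal.ofReal (c n N) := by
  rw [Z, ENNReal.tsum_eq_iSup_sum' (bset n) ?cof]
  · exact iSup_congr fun N => sum_bset n N
  case cof =>
    intro t
    refine ⟨t.sup (fun f => Finset.univ.sup f.1), fun f hf => ?_⟩
    rw [bset, Set.Finite.mem_toFinset]
    intro i
    exact le_trans (Finset.le_sup (Finset.mem_univ i)) (Finset.le_sup (f := fun f => Finset.univ.sup f.1) hf)

lemma prod_expand (N : ℕ) (x : ℝ) :
    ∏ k ∈ Icc 1 N, (1 + x ^ 2 / (k:ℝ) ^ 2) =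
      ∑ n ∈ range (N + 1), c n N * x ^ (2 * n) := by
  unfold c
  have h1 : ∀ k ∈ Icc 1 N, (1 + x ^ 2 / (k:ℝ) ^ 2) = (x ^ 2 / (k:ℝ) ^ 2 + 1) :=
    fun k _ => by ring
  rw [Finset.prod_congr rfl h1, Finset.prod_add]
  rw [← Finset.sum_fiberwise_of_maps_to (g := fun S => S.card) (t := range (N+1))
      (fun S hS => by
        rw [mem_range, Nat.lt_succ_iff]
        exact le_trans (card_le_card (mem_powerset.1 hS)) (by simp [Nat.card_Icc]))]
  refine Finset.sum_congr rfl fun n _ => ?_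
  rw [Finset.sum_mul,
    show (powerset (Icc 1 N)).filter (fun S => S.card = n) = powersetCard n (Icc 1 N) from
      powersetCard_eq_filter.symm]
  refine Finset.sum_congr rfl fun S hS => ?_
  obtain ⟨hSsub, hScard⟩ := mem_powersetCard.1 hS
  rw [Finset.prod_const_one, mul_one]
  have : ∀ k ∈ S, x ^ 2 / (k:ℝ) ^ 2 = (1 / (k:ℝ) ^ 2) * x ^ 2 := fun k _ => by ring
  rw [Finset.prod_congr rfl this, Finset.prod_mul_distrib, Finset.prod_const, hScard, pow_mul]

lemma euler_sinh_prod (x : ℝ) (hx : x ≠ 0) :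
    Tendsto (fun N : ℕ => ∏ k ∈ Icc 1 N, (1 + x ^ 2 / (k:ℝ) ^ 2)) atTop
      (𝓝 (Real.sinh (Real.pi * x) / (Real.pi * x))) := by
  have hc := Complex.tendsto_euler_sin_prod (x * Complex.I)
  have hpx : (Real.pi : ℂ) * (x * Complex.I) ≠ 0 := by
    simp [Complex.I_ne_zero, Real.pi_ne_zero, hx]
  have hc2 := hc.div_const ((Real.pi : ℂ) * (x * Complex.I))
  have hterm : ∀ N : ℕ, (Real.pi : ℂ) * (x * Complex.I) *
        (∏ j ∈ Finset.range N, ((1:ℂ) - (x * Complex.I) ^ 2 / ((j:ℂ) + 1) ^ 2)) /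
        ((Real.pi : ℂ) * (x * Complex.I)) =
      ((∏ k ∈ Icc 1 N, (1 + x ^ 2 / (k:ℝ) ^ 2) : ℝ) : ℂ) := by
    intro N
    rw [mul_comm ((Real.pi : ℂ) * (x * Complex.I)), mul_div_assoc, div_self hpx, mul_one]
    push_cast
    rw [show Icc 1 N = Ico 1 (N+1) by rfl, Finset.prod_Ico_eq_prod_range]
    simp only [Nat.add_sub_cancel]
    refine Finset.prod_congr rfl fun j _ => ?_
    have h2 : ((x:ℂ) * Complex.I) ^ 2 = -(x:ℂ)^2 := by
      rw [mul_pow, Complex.I_sq]; ring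
    rw [h2]
    push_cast
    ring
  have hlim : Complex.sin ((Real.pi : ℂ) * (x * Complex.I)) / ((Real.pi : ℂ) * (x * Complex.I)) =
      ((Real.sinh (Real.pi * x) / (Real.pi * x) : ℝ) : ℂ) := by
    have h3 : (Real.pi : ℂ) * (x * Complex.I) = ((Real.pi * x : ℝ) : ℂ) * Complex.I := by
      push_cast; ring
    rw [h3, Complex.sin_mul_I, mul_div_mul_right _ _ Complex.I_ne_zero,
      ← Complex.ofReal_sinh, ← Complex.ofReal_div]
  rw [funext hterm, hlim] at hc2
  have h4 := (Complex.continuous_re.tendsto _).comp hc2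
  simpa only [Function.comp_def, Complex.ofReal_re] using h4

lemma iSup_tsum_swap (g : ℕ → ℕ → ℝ≥0∞) (hmono : ∀ n, Monotone (fun N => g N n)) :
    ⨆ N, ∑' n, g N n = ∑' n, ⨆ N, g N n := by
  apply le_antisymm
  · exact iSup_le fun N => ENNReal.tsum_le_tsum fun n => le_iSup (fun N => g N n) N
  · rw [ENNReal.tsum_eq_iSup_sum]
    refine iSup_le fun s => ?_
    rw [ENNReal.finsetSum_iSup_of_monotone (fun n => hmono n)]
    exact iSup_le fun N => le_trans (ENNReal.sum_le_tsum s) (le_iSup (fun N => ∑' n, g N n) N)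

lemma c_mono (n : ℕ) : Monotone (fun N => c n N) := by
  have h : ∀ N, c n N ≤ c n (N + 1) := by
    intro N
    refine Finset.sum_le_sum_of_subset_of_nonneg
      (powersetCard_mono (Finset.Icc_subset_Icc_right (Nat.le_succ N))) ?_
    intro S _ _
    exact Finset.prod_nonneg fun k _ => by positivity
  exact monotone_nat_of_le_succ h

lemma main_id (x : ℝ) (hx : x ≠ 0) :
    ∑' n : ℕ, Z n * (ENNReal.ofReal (x ^ 2)) ^ n =
      ENNReal.ofReal (Real.sinh (Real.pi * x) / (Real.pi * x)) := by
  have hP : ∀ N : ℕ, (0:ℝ) ≤ ∏ k ∈ Icc 1 N, (1 + x ^ 2 / (k:ℝ) ^ 2) :=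
    fun N => Finset.prod_nonneg fun k _ => by positivity
  -- Step 1 : RHS as iSup
  have hmonoP : Monotone (fun N : ℕ => ENNReal.ofReal (∏ k ∈ Icc 1 N, (1 + x ^ 2 / (k:ℝ) ^ 2))) := by
    refine monotone_nat_of_le_succ fun N => ENNReal.ofReal_le_ofReal ?_
    rw [Finset.prod_Icc_succ_top (Nat.le_add_left 1 N)]
    have h1 : (0:ℝ) ≤ x ^ 2 / ((N:ℝ)+1) ^ 2 := by positivity
    have h2 := hP N
    push_cast
    nlinarith [h1, h2]
  have hlim := (ENNReal.continuous_ofReal.tendsto _).comp (euler_sinh_prod x hx)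
  have hstep1 : ENNReal.ofReal (Real.sinh (Real.pi * x) / (Real.pi * x)) =
      ⨆ N : ℕ, ENNReal.ofReal (∏ k ∈ Icc 1 N, (1 + x ^ 2 / (k:ℝ) ^ 2)) :=
    tendsto_nhds_unique hlim (tendsto_atTop_iSup hmonoP)
  -- Step 2 : expand each term
  have hstep2 : ∀ N : ℕ, ENNReal.ofReal (∏ k ∈ Icc 1 N, (1 + x ^ 2 / (k:ℝ) ^ 2)) =
      ∑' n : ℕ, ENNReal.ofReal (c n N) * (ENNReal.ofReal (x ^ 2)) ^ n := by
    intro N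
    rw [prod_expand N x,
      ENNReal.ofReal_sum_of_nonneg (fun n _ => mul_nonneg (c_nonneg n N) ((even_two_mul n).pow_nonneg x))]
    rw [show (∑ n ∈ range (N+1), ENNReal.ofReal (c n N * x ^ (2*n))) =
        ∑ n ∈ range (N+1), ENNReal.ofReal (c n N) * (ENNReal.ofReal (x ^ 2)) ^ n from
      Finset.sum_congr rfl fun n _ => by
        rw [ENNReal.ofReal_mul (c_nonneg n N), pow_mul, ENNReal.ofReal_pow (sq_nonneg x)]]
    refine (tsum_eq_sum fun n hn => ?_).symm
    have hcard : (Icc 1 N).card < n := by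
      simp only [Finset.mem_range, not_lt] at hn
      rw [Nat.card_Icc]
      omega
    rw [c, powersetCard_eq_empty.2 hcard, Finset.sum_empty, ENNReal.ofReal_zero, zero_mul]
  -- Step 3+4 : swap and conclude
  have hmono2 : ∀ n : ℕ, Monotone (fun N : ℕ =>
      ENNReal.ofReal (c n N) * (ENNReal.ofReal (x ^ 2)) ^ n) :=
    fun n a b hab => mul_le_mul_left (ENNReal.ofReal_le_ofReal (c_mono n hab)) _
  calc ∑' n : ℕ, Z n * (ENNReal.ofReal (x ^ 2)) ^ n
      = ∑' n : ℕ, ⨆ N : ℕ, ENNReal.ofReal (c n N) * (ENNReal.ofReal (x ^ 2)) ^ n := by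
        refine tsum_congr fun n => ?_
        rw [Ztsum, ENNReal.iSup_mul]
    _ = ⨆ N : ℕ, ∑' n : ℕ, ENNReal.ofReal (c n N) * (ENNReal.ofReal (x ^ 2)) ^ n :=
        (iSup_tsum_swap _ hmono2).symm
    _ = ⨆ N : ℕ, ENNReal.ofReal (∏ k ∈ Icc 1 N, (1 + x ^ 2 / (k:ℝ) ^ 2)) := by
        exact iSup_congr fun N => (hstep2 N).symm
    _ = ENNReal.ofReal (Real.sinh (Real.pi * x) / (Real.pi * x)) := hstep1.symm

lemma hasSum_sinh_div (y : ℝ) (hy : y ≠ 0) :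
    HasSum (fun n : ℕ => y ^ (2 * n) / ((2 * n + 1)! : ℝ)) (Real.sinh y / y) := by
  have h := (Real.hasSum_sinh y).div_const y
  convert h using 2 with n
  · rfl
  rw [pow_succ]
  field_simp

lemma prod_nonneg' {n : ℕ} (f : {f : Fin n → ℕ // StrictMono f ∧ ∀ i, 0 < f i}) :
    0 ≤ ∏ i, (1 : ℝ) / ((f.1 i : ℝ)) ^ 2 :=
  Finset.prod_nonneg fun i _ => by positivity

lemma hZfin : ∀ n, Z n ≠ ⊤ := by
  have h1 := main_id 1 one_ne_zero
  have h2 : ∑' n : ℕ, Z n ≠ ⊤ := by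
    rw [show ∑' n : ℕ, Z n = ∑' n : ℕ, Z n * (ENNReal.ofReal ((1:ℝ) ^ 2)) ^ n by
      simp, h1]
    exact ENNReal.ofReal_ne_top
  exact ENNReal.ne_top_of_tsum_ne_top h2

lemma zeta_toReal (n : ℕ) : zetaTwos n = (Z n).toReal := by
  rw [Z]
  simp only [wt]
  rw [ENNReal.tsum_toReal_eq (fun f => ENNReal.ofReal_ne_top)]
  exact (tsum_congr fun f => (ENNReal.toReal_ofReal (prod_nonneg' f)).symm)

lemma zeta_nonneg (n : ℕ) : 0 ≤ zetaTwos n := by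
  rw [zeta_toReal]; exact ENNReal.toReal_nonneg

theorem main_result :
    (∀ n : ℕ, zetaTwos n = Real.pi ^ (2 * n) / (Nat.factorial (2 * n + 1) : ℝ)) ∧
    (∀ x : ℝ, x ≠ 0 →
      ∑' n : ℕ, zetaTwos n * x ^ (2 * n) = Real.sinh (Real.pi * x) / (Real.pi * x)) := by
  have part1 : ∀ n : ℕ, zetaTwos n = Real.pi ^ (2 * n) / (Nat.factorial (2 * n + 1) : ℝ) := by
    refine coeff_ext zeta_nonneg (fun n => by positivity) ?_
    intro t ht
    set x := Real.sqrt t with hxdef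
    have hx0 : 0 < x := Real.sqrt_pos.2 ht.1
    have hx2 : x ^ 2 = t := Real.sq_sqrt ht.1.le
    have hπx : 0 < Real.pi * x := mul_pos Real.pi_pos hx0
    have hid := main_id x hx0.ne'
    rw [hx2] at hid
    have hfin_tot : ∑' n : ℕ, Z n * (ENNReal.ofReal t) ^ n ≠ ⊤ := by
      rw [hid]; exact ENNReal.ofReal_ne_top
    have hterm : ∀ n : ℕ, (Z n * (ENNReal.ofReal t) ^ n).toReal = zetaTwos n * t ^ n := by
      intro n
      rw [ENNReal.toReal_mul, ENNReal.toReal_pow, ENNReal.toReal_ofReal ht.1.le, zeta_toReal]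
    have hsummable : Summable fun n : ℕ => zetaTwos n * t ^ n := by
      have := ENNReal.summable_toReal hfin_tot
      rwa [funext hterm] at this
    have hval : (∑' n : ℕ, zetaTwos n * t ^ n) = Real.sinh (Real.pi * x) / (Real.pi * x) := by
      have h3 := ENNReal.tsum_toReal_eq
        (f := fun n : ℕ => Z n * (ENNReal.ofReal t) ^ n)
        (fun n => ENNReal.mul_ne_top (hZfin n) (ENNReal.pow_ne_top ENNReal.ofReal_ne_top))
      rw [funext hterm] at h3
      rw [← h3, hid, ENNReal.toReal_ofReal]
      exact div_nonneg (Real.sinh_nonneg_iff.2 hπx.le) hπx.le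
    -- b side
    have hb := hasSum_sinh_div (Real.pi * x) hπx.ne'
    have hbterm : ∀ n : ℕ, (Real.pi * x) ^ (2 * n) / ((2 * n + 1)! : ℝ) =
        Real.pi ^ (2 * n) / ((2 * n + 1)! : ℝ) * t ^ n := by
      intro n
      rw [mul_pow, show (x:ℝ) ^ (2 * n) = (x ^ 2) ^ n by rw [← pow_mul], hx2]
      ring
    rw [funext hbterm] at hb
    exact ⟨hsummable, hb.summable, hval.trans hb.tsum_eq.symm⟩
  refine ⟨part1, fun x hx => ?_⟩
  have hπx : Real.pi * x ≠ 0 := mul_ne_zero Real.pi_ne_zero hx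
  have hb := hasSum_sinh_div (Real.pi * x) hπx
  rw [← hb.tsum_eq]
  refine tsum_congr fun n => ?_
  rw [part1 n, mul_pow]
  ring

end ZetaTwosAux

theorem zeta_twos_eval_and_generating_series :
    (∀ n : ℕ, zetaTwos n = Real.pi ^ (2 * n) / (Nat.factorial (2 * n + 1) : ℝ)) ∧
    (∀ x : ℝ, x ≠ 0 →
      ∑' n : ℕ, zetaTwos n * x ^ (2 * n) = Real.sinh (Real.pi * x) / (Real.pi * x)) := by
  exact ZetaTwosAux.main_result
end

section
/- The generating series of the multiple zeta star values ζ⋆({2}^n) satisfies ∑_{n≥0} ζ⋆({2}^n) x^{2n} = πx/sin(πx) for real x with |x| < 1. -/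
open List
open scoped ENNReal

namespace ZetaAux

/-- Sorted positive lists with entries bounded by `N`. -/
abbrev S (N : ℕ) : Type := {l : List ℕ // l.Pairwise (· ≤ ·) ∧ ∀ y ∈ l, 0 < y ∧ y ≤ N}

/-- Sorted positive lists. -/
abbrev SA : Type := {l : List ℕ // l.Pairwise (· ≤ ·) ∧ ∀ y ∈ l, 0 < y}

lemma dropWhile_gt {N : ℕ} : ∀ {l : List ℕ}, l.Pairwise (· ≤ ·) →
    ∀ y ∈ l.dropWhile (fun z => z ≤ N), ¬ (y ≤ N) := by
  intro l
  induction l with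
  | nil => simp
  | cons a l ih =>
    intro hs y hy
    rw [List.dropWhile_cons] at hy
    by_cases ha : a ≤ N
    · simp [ha] at hy
      exact ih hs.of_cons y hy
    · simp [ha] at hy
      rcases hy with rfl | hmem
      · exact ha
      · intro hyN
        exact ha (le_trans (List.rel_of_pairwise_cons hs hmem) hyN)

def stepEquiv (N : ℕ) : S (N + 1) ≃ S N × ℕ where
  toFun l := (⟨l.1.takeWhile (fun z => z ≤ N),
      l.2.1.sublist (l.1.takeWhile_sublist _),
      fun y hy => ⟨(l.2.2 y ((l.1.takeWhile_sublist _).mem hy)).1,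
        by simpa using List.mem_takeWhile_imp hy⟩⟩,
    (l.1.dropWhile (fun z => z ≤ N)).length)
  invFun p := ⟨p.1.1 ++ List.replicate p.2 (N + 1), by
      refine List.pairwise_append.2 ⟨p.1.2.1, ?_, ?_⟩
      · exact List.pairwise_replicate.2 (Or.inr le_rfl)
      · intro x hx y hy
        rw [List.eq_of_mem_replicate hy]
        exact le_trans (p.1.2.2 x hx).2 (Nat.le_succ N),
      by
      intro y hy
      rcases List.mem_append.mp hy with h | h
      · exact ⟨(p.1.2.2 y h).1, le_trans (p.1.2.2 y h).2 (Nat.le_succ N)⟩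
      · rw [List.eq_of_mem_replicate h]; exact ⟨Nat.succ_pos N, le_rfl⟩⟩
  left_inv l := by
    apply Subtype.ext
    have h1 : ∀ y ∈ l.1.dropWhile (fun z => z ≤ N), y = N + 1 := by
      intro y hy
      have h2 := dropWhile_gt l.2.1 y hy
      have h3 := (l.2.2 y ((l.1.dropWhile_sublist _).mem hy)).2
      omega
    have : List.replicate (l.1.dropWhile (fun z => z ≤ N)).length (N + 1)
        = l.1.dropWhile (fun z => z ≤ N) :=
      (List.eq_replicate_of_mem h1).symm
    simp only [this]
    exact l.1.takeWhile_append_dropWhile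
  right_inv p := by
    have hp : ∀ a ∈ p.1.1, (fun z => decide (z ≤ N)) a = true := by
      intro a ha; simpa using (p.1.2.2 a ha).2
    have hrep : ∀ j : ℕ, (List.replicate j (N+1)).takeWhile (fun z => z ≤ N) = []
        ∧ (List.replicate j (N+1)).dropWhile (fun z => z ≤ N) = List.replicate j (N+1) := by
      intro j
      constructor
      · rw [List.takeWhile_replicate]; simp
      · rw [List.dropWhile_replicate]; simp
    refine Prod.ext (Subtype.ext ?_) ?_
    · show (p.1.1 ++ List.replicate p.2 (N+1)).takeWhile (fun z => z ≤ N) = p.1.1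
      rw [List.takeWhile_append_of_pos hp, (hrep p.2).1, List.append_nil]
    · show ((p.1.1 ++ List.replicate p.2 (N+1)).dropWhile (fun z => z ≤ N)).length = p.2
      rw [List.dropWhile_append_of_pos hp, (hrep p.2).2, List.length_replicate]

lemma stepEquiv_symm_apply (N : ℕ) (p : S N × ℕ) :
    ((stepEquiv N).symm p).1 = p.1.1 ++ List.replicate p.2 (N + 1) := rfl

noncomputable def w (t : ℝ) (l : List ℕ) : ℝ≥0∞ :=
  (l.map (fun k : ℕ => ENNReal.ofReal (t / (k : ℝ) ^ 2))).prod

lemma w_append (t : ℝ) (l r : List ℕ) : w t (l ++ r) = w t l * w t r := by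
  simp [w]

lemma w_replicate (t : ℝ) (j k : ℕ) :
    w t ((List.replicate j k : List ℕ)) = (ENNReal.ofReal (t / (k : ℝ) ^ 2)) ^ j := by
  unfold w
  rw [List.map_replicate, List.prod_replicate]

noncomputable def Z (t : ℝ) (N : ℕ) : ℝ≥0∞ := ∑' l : S N, w t l.1

instance (N : ℕ) : Nonempty (S N) := ⟨⟨[], by simp [List.Pairwise], by simp⟩⟩

lemma Z_zero (t : ℝ) : Z t 0 = 1 := by
  have hu : ∀ l : S 0, l = (⟨[], by simp [List.Pairwise], by simp⟩ : S 0) := by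
    rintro ⟨l, hs, hb⟩
    apply Subtype.ext
    cases l with
    | nil => rfl
    | cons a l => exact absurd (hb a (List.mem_cons_self)) (by omega)
  rw [Z, tsum_eq_single (⟨[], by simp [List.Pairwise], by simp⟩ : S 0)
    (fun b hb => absurd (hu b) hb)]
  simp [w]

lemma Z_succ (t : ℝ) (N : ℕ) :
    Z t (N + 1) = Z t N * (1 - ENNReal.ofReal (t / ((N : ℝ) + 1) ^ 2))⁻¹ := by
  have h1 : Z t (N + 1) = ∑' p : S N × ℕ, w t (((stepEquiv N).symm p).1) :=
    (Equiv.tsum_eq (stepEquiv N).symm (fun l : S (N + 1) => w t l.1)).symm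
  set c : ℝ≥0∞ := ENNReal.ofReal (t / ((N : ℝ) + 1) ^ 2) with hc
  have h2 : ∀ p : S N × ℕ, w t (((stepEquiv N).symm p).1) = w t p.1.1 * c ^ p.2 := by
    intro p
    rw [stepEquiv_symm_apply, w_append, w_replicate, hc]
    norm_cast
  calc Z t (N + 1) = ∑' p : S N × ℕ, w t p.1.1 * c ^ p.2 := by
        rw [h1]; exact tsum_congr h2
    _ = ∑' (a : S N) (b : ℕ), w t a.1 * c ^ b :=
        ENNReal.tsum_prod' (f := fun p : S N × ℕ => w t p.1.1 * c ^ p.2)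
    _ = ∑' (a : S N), w t a.1 * (1 - c)⁻¹ := by
        congr 1; funext a; rw [ENNReal.tsum_mul_left, ENNReal.tsum_geometric]
    _ = Z t N * (1 - c)⁻¹ := ENNReal.tsum_mul_right

lemma Z_eq_prod (t : ℝ) (N : ℕ) :
    Z t N = ∏ j ∈ Finset.range N, (1 - ENNReal.ofReal (t / ((j : ℝ) + 1) ^ 2))⁻¹ := by
  induction N with
  | zero => simpa using Z_zero t
  | succ N ih => rw [Finset.prod_range_succ, Z_succ, ih]

noncomputable def ZZ (t : ℝ) : ℝ≥0∞ := ∑' l : SA, w t l.1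

lemma ZZ_eq_iSup (t : ℝ) : ZZ t = ⨆ N, Z t N := by
  apply _root_.le_antisymm
  · rw [ZZ, ENNReal.tsum_eq_iSup_sum]
    apply iSup_le
    intro s
    set N := s.sup (fun l : SA => l.1.sum) with hN
    have hbound : ∀ l : SA, l ∈ s → ∀ y ∈ l.1, 0 < y ∧ y ≤ N := by
      intro l hl y hy
      refine ⟨l.2.2 y hy, le_trans (List.le_sum_of_mem hy) (Finset.le_sup (f := fun l : SA => l.1.sum) hl)⟩
    set s' : Finset (S N) :=
      s.attach.image (fun l => (⟨l.1.1, l.1.2.1, hbound l.1 l.2⟩ : S N)) with hs'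
    have hsum : ∑ a ∈ s', w t a.1 = ∑ a ∈ s, w t a.1 := by
      rw [hs', Finset.sum_image (by
        intro a _ b _ hab
        apply Subtype.ext; apply Subtype.ext
        exact Subtype.mk_eq_mk.mp hab)]
      exact Finset.sum_attach s (fun a => w t a.1)
    calc ∑ a ∈ s, w t a.1 = ∑ a ∈ s', w t a.1 := hsum.symm
      _ ≤ Z t N := ENNReal.sum_le_tsum s'
      _ ≤ ⨆ N, Z t N := le_iSup _ N
  · apply iSup_le
    intro N
    exact Summable.tsum_le_tsum_of_inj
      (fun l : S N => (⟨l.1, l.2.1, fun y hy => (l.2.2 y hy).1⟩ : SA))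
      (fun a b hab => Subtype.ext (Subtype.mk_eq_mk.mp hab))
      (fun c _ => zero_le) (fun b => le_rfl) ENNReal.summable ENNReal.summable

/-- Equivalence between monotone positive tuples and sorted positive lists of length n. -/
def finEquiv (n : ℕ) : {f : Fin n → ℕ // Monotone f ∧ ∀ i, 0 < f i}
    ≃ {l : SA // l.1.length = n} where
  toFun f := ⟨⟨List.ofFn f.1, (List.sortedLE_ofFn_iff.2 f.2.1).pairwise, by
      intro y hy
      rw [List.mem_ofFn] at hy
      obtain ⟨i, rfl⟩ := hy
      exact f.2.2 i⟩, by simp⟩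
  invFun l := ⟨fun i => l.1.1.get (Fin.cast l.2.symm i),
    ⟨fun i j hij => l.1.2.1.rel_get_of_le (by simpa using hij),
     fun i => l.1.2.2 _ (l.1.1.get_mem _)⟩⟩
  left_inv f := by
    apply Subtype.ext
    funext i
    simp
  right_inv l := by
    obtain ⟨⟨l, hl⟩, hlen⟩ := l
    subst hlen
    apply Subtype.ext
    apply Subtype.ext
    simp [List.ofFn_get]

end ZetaAux

/-- The multiple zeta star value ζ⋆({2}^n) = ∑_{0<n₁≤⋯≤n_n} 1/(n₁²⋯n_n²). -/
noncomputable def zetaStarTwos (n : ℕ) : ℝ :=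
  ∑' f : {f : Fin n → ℕ // Monotone f ∧ ∀ i, 0 < f i}, ∏ i, (1 : ℝ) / ((f.1 i : ℝ)) ^ 2

theorem zeta_star_twos_generating_series (x : ℝ) (hx : x ≠ 0) (hx1 : |x| < 1) :
    ∑' n : ℕ, zetaStarTwos n * x ^ (2 * n) = Real.pi * x / Real.sin (Real.pi * x) := by
  classical
  have habs := abs_lt.mp hx1
  set t : ℝ := x ^ 2 with ht
  have ht0 : 0 < t := by positivity
  have ht1 : t < 1 := by nlinarith [habs.1, habs.2]
  have hπ : 0 < Real.pi := Real.pi_pos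
  have hc : 0 < Real.sin (Real.pi * x) / (Real.pi * x) := by
    rcases lt_or_gt_of_ne hx with hneg | hpos
    · have h1 : Real.pi * x < 0 := mul_neg_of_pos_of_neg hπ hneg
      have h2 : Real.sin (Real.pi * x) < 0 := by
        have h3 : 0 < Real.sin (Real.pi * (-x)) :=
          Real.sin_pos_of_pos_of_lt_pi (by nlinarith) (by nlinarith)
        rw [mul_neg, Real.sin_neg] at h3; linarith
      exact div_pos_of_neg_of_neg h2 h1
    · have h1 : 0 < Real.pi * x := mul_pos hπ hpos
      have h2 : 0 < Real.sin (Real.pi * x) :=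
        Real.sin_pos_of_pos_of_lt_pi h1 (by nlinarith)
      exact div_pos h2 h1
  set c : ℝ := Real.sin (Real.pi * x) / (Real.pi * x) with hcdef
  set q : ℕ → ℝ := fun N => ∏ j ∈ Finset.range N, (1 - t / ((j : ℝ) + 1) ^ 2) with hq
  have hfac : ∀ j : ℕ, 0 < 1 - t / ((j : ℝ) + 1) ^ 2 := by
    intro j
    have hj : (0 : ℝ) ≤ (j : ℝ) := Nat.cast_nonneg j
    have h1 : t / ((j : ℝ) + 1) ^ 2 ≤ t := by
      apply div_le_self ht0.le
      nlinarith
    linarith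
  have hqpos : ∀ N, 0 < q N := fun N => Finset.prod_pos (fun j _ => hfac j)
  have hqanti : ∀ N, q (N + 1) ≤ q N := by
    intro N
    have h1 : 0 ≤ t / ((N : ℝ) + 1) ^ 2 := div_nonneg ht0.le (sq_nonneg _)
    calc q (N + 1) = q N * (1 - t / ((N : ℝ) + 1) ^ 2) := Finset.prod_range_succ _ _
      _ ≤ q N * 1 := mul_le_mul_of_nonneg_left (by linarith) (hqpos N).le
      _ = q N := mul_one _
  have hpx : Real.pi * x ≠ 0 := mul_ne_zero hπ.ne' hx
  have hqtend : Filter.Tendsto q Filter.atTop (nhds c) := by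
    have h2 := (Real.tendsto_euler_sin_prod x).div_const (Real.pi * x)
    have h3 : (fun n : ℕ => (Real.pi * x *
        ∏ j ∈ Finset.range n, (1 - x ^ 2 / ((j : ℝ) + 1) ^ 2)) / (Real.pi * x)) = q := by
      funext n
      rw [mul_comm, mul_div_assoc, div_self hpx, mul_one]
    rwa [h3] at h2
  have hZ : ∀ N, ZetaAux.Z t N = ENNReal.ofReal ((q N)⁻¹) := by
    intro N
    rw [ZetaAux.Z_eq_prod, hq]
    simp only
    rw [← Finset.prod_inv_distrib,
      ENNReal.ofReal_prod_of_nonneg (fun j _ => inv_nonneg.2 (hfac j).le)]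
    apply Finset.prod_congr rfl
    intro j _
    have h1 : (1 : ℝ≥0∞) - ENNReal.ofReal (t / ((j : ℝ) + 1) ^ 2)
        = ENNReal.ofReal (1 - t / ((j : ℝ) + 1) ^ 2) := by
      rw [ENNReal.ofReal_sub _ (div_nonneg ht0.le (sq_nonneg _)), ENNReal.ofReal_one]
    rw [h1, ← ENNReal.ofReal_inv_of_pos (hfac j)]
  have hZZ : ZetaAux.ZZ t = ENNReal.ofReal c⁻¹ := by
    rw [ZetaAux.ZZ_eq_iSup]
    have hmono : Monotone (fun N => ENNReal.ofReal ((q N)⁻¹)) := by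
      apply monotone_nat_of_le_succ
      intro N
      exact ENNReal.ofReal_le_ofReal (inv_anti₀ (hqpos (N + 1)) (hqanti N))
    have htendinv : Filter.Tendsto (fun N => ENNReal.ofReal ((q N)⁻¹))
        Filter.atTop (nhds (ENNReal.ofReal c⁻¹)) :=
      (ENNReal.continuous_ofReal.tendsto _).comp (hqtend.inv₀ hc.ne')
    calc ⨆ N, ZetaAux.Z t N = ⨆ N, ENNReal.ofReal ((q N)⁻¹) := iSup_congr hZ
      _ = ENNReal.ofReal c⁻¹ := tendsto_nhds_unique (tendsto_atTop_iSup hmono) htendinv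
  set inner : ℕ → ℝ≥0∞ := fun n =>
    ∑' f : {f : Fin n → ℕ // Monotone f ∧ ∀ i, 0 < f i},
      ∏ i, ENNReal.ofReal (t / ((f.1 i : ℝ)) ^ 2) with hinner
  have hsigma : ZetaAux.ZZ t = ∑' n : ℕ, inner n := by
    rw [ZetaAux.ZZ,
      ← Equiv.tsum_eq (Equiv.sigmaFiberEquiv (fun l : ZetaAux.SA => l.1.length))
        (fun l => ZetaAux.w t l.1),
      ENNReal.tsum_sigma']
    apply tsum_congr
    intro n
    show ∑' (b : {l : ZetaAux.SA // l.1.length = n}), ZetaAux.w t b.1.1 = inner n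
    rw [← Equiv.tsum_eq (ZetaAux.finEquiv n)
      (fun l : {l : ZetaAux.SA // l.1.length = n} => ZetaAux.w t l.1.1)]
    apply tsum_congr
    intro f
    show ZetaAux.w t (List.ofFn f.1) = _
    rw [ZetaAux.w, List.map_ofFn, List.prod_ofFn]
    rfl
  have hterm : ∀ n, (inner n).toReal = zetaStarTwos n * x ^ (2 * n) := by
    intro n
    have h1 : ∀ f : {f : Fin n → ℕ // Monotone f ∧ ∀ i, 0 < f i},
        (∏ i, ENNReal.ofReal (t / ((f.1 i : ℝ)) ^ 2)).toReal
          = x ^ (2 * n) * ∏ i, (1 : ℝ) / ((f.1 i : ℝ)) ^ 2 := by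
      intro f
      rw [ENNReal.toReal_prod,
        Finset.prod_congr rfl (fun i _ =>
          ENNReal.toReal_ofReal (div_nonneg ht0.le (sq_nonneg _))),
        Finset.prod_congr rfl (fun i (_ : i ∈ Finset.univ) =>
          show t / ((f.1 i : ℝ)) ^ 2 = t * ((1 : ℝ) / ((f.1 i : ℝ)) ^ 2) by ring),
        Finset.prod_mul_distrib, Finset.prod_const, Finset.card_univ, Fintype.card_fin,
        pow_mul]
    rw [hinner]
    simp only
    rw [ENNReal.tsum_toReal_eq (fun f =>
      (ENNReal.prod_lt_top (fun i _ => ENNReal.ofReal_lt_top)).ne),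
      tsum_congr h1, tsum_mul_left, zetaStarTwos]
    ring
  have htot : (∑' n : ℕ, inner n) ≠ ⊤ := by
    rw [← hsigma, hZZ]; exact ENNReal.ofReal_ne_top
  have hne : ∀ n, inner n ≠ ⊤ := fun n => ne_top_of_le_ne_top htot (ENNReal.le_tsum n)
  calc ∑' n : ℕ, zetaStarTwos n * x ^ (2 * n) = ∑' n : ℕ, (inner n).toReal :=
        tsum_congr (fun n => (hterm n).symm)
    _ = (∑' n : ℕ, inner n).toReal := (ENNReal.tsum_toReal_eq hne).symm
    _ = (ZetaAux.ZZ t).toReal := by rw [hsigma]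
    _ = (ENNReal.ofReal c⁻¹).toReal := by rw [hZZ]
    _ = c⁻¹ := ENNReal.toReal_ofReal (inv_nonneg.2 hc.le)
    _ = Real.pi * x / Real.sin (Real.pi * x) := by rw [hcdef, inv_div]
end

section
/- For integers a, b ≥ 2, the multiple t value satisfies t(a,b) = (1/2) ζ(ā,b̄) + (1/2) ζ(a,b) − 2^{−a−b} ζ(a,b). -/
/-- Signed double zeta value: ∑_{0<m<n} ε₁^m ε₂^n / (m^a n^b). -/
noncomputable def signedDoubleZeta (e1 e2 : ℝ) (a b : ℕ) : ℝ :=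
  ∑' p : {p : ℕ × ℕ // 0 < p.1 ∧ p.1 < p.2},
    e1 ^ p.1.1 * e2 ^ p.1.2 / ((p.1.1 : ℝ) ^ a * (p.1.2 : ℝ) ^ b)

/-- Double t value t(a,b) = ∑_{0<m<n} 1/((2m−1)^a (2n−1)^b). -/
noncomputable def doubleT (a b : ℕ) : ℝ :=
  ∑' p : {p : ℕ × ℕ // 0 < p.1 ∧ p.1 < p.2},
    1 / (((2 * p.1.1 - 1 : ℕ) : ℝ) ^ a * ((2 * p.1.2 - 1 : ℕ) : ℝ) ^ b)

namespace DoubleTAux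

abbrev S := {p : ℕ × ℕ // 0 < p.1 ∧ p.1 < p.2}

noncomputable def fz (a b : ℕ) (p : S) : ℝ := 1 / ((p.1.1 : ℝ) ^ a * (p.1.2 : ℝ) ^ b)

noncomputable def go (a b : ℕ) (p : S) : ℝ :=
  if Odd p.1.1 ∧ Odd p.1.2 then fz a b p else 0

noncomputable def ge (a b : ℕ) (p : S) : ℝ :=
  if Even p.1.1 ∧ Even p.1.2 then fz a b p else 0

def phiOdd (p : S) : S :=
  ⟨(2 * p.1.1 - 1, 2 * p.1.2 - 1), by have h := p.2; omega⟩

def phiEven (p : S) : S :=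
  ⟨(2 * p.1.1, 2 * p.1.2), by have h := p.2; omega⟩

lemma phiOdd_inj : Function.Injective phiOdd := by
  rintro ⟨⟨m, n⟩, hm, hmn⟩ ⟨⟨m', n'⟩, hm', hmn'⟩ h
  simp only [phiOdd, Subtype.mk.injEq, Prod.mk.injEq] at h ⊢
  omega

lemma phiEven_inj : Function.Injective phiEven := by
  rintro ⟨⟨m, n⟩, hm, hmn⟩ ⟨⟨m', n'⟩, hm', hmn'⟩ h
  simp only [phiEven, Subtype.mk.injEq, Prod.mk.injEq] at h ⊢
  omega

lemma fz_nonneg (a b : ℕ) (p : S) : 0 ≤ fz a b p := by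
  unfold fz; positivity

lemma summable_fz (a b : ℕ) (ha : 2 ≤ a) (hb : 2 ≤ b) : Summable (fz a b) := by
  have h1 : Summable (fun m : ℕ => 1 / (m : ℝ) ^ a) :=
    (Real.summable_one_div_nat_pow).2 ha
  have h2 : Summable (fun n : ℕ => 1 / (n : ℝ) ^ b) :=
    (Real.summable_one_div_nat_pow).2 hb
  have h3 := h1.mul_of_nonneg h2 (fun _ => by positivity) (fun _ => by positivity)
  have h4 : Summable (fun p : ℕ × ℕ => 1 / ((p.1 : ℝ) ^ a * (p.2 : ℝ) ^ b)) := by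
    have : (fun p : ℕ × ℕ => 1 / ((p.1 : ℝ) ^ a * (p.2 : ℝ) ^ b))
        = fun p : ℕ × ℕ => (1 / (p.1 : ℝ) ^ a) * (1 / (p.2 : ℝ) ^ b) := by
      funext p; rw [div_mul_div_comm, one_mul]
    rw [this]
    exact h3
  exact h4.subtype _

lemma go_support (a b : ℕ) : Function.support (go a b) ⊆ Set.range phiOdd := by
  intro x hx
  rw [Function.mem_support, go] at hx
  split at hx
  · obtain ⟨⟨k, hk⟩, ⟨l, hl⟩⟩ := ‹Odd x.1.1 ∧ Odd x.1.2›
    have hx2 := x.2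
    refine ⟨⟨(k + 1, l + 1), by omega⟩, ?_⟩
    apply Subtype.ext
    apply Prod.ext <;> simp only [phiOdd] <;> omega
  · exact absurd rfl hx

lemma ge_support (a b : ℕ) : Function.support (ge a b) ⊆ Set.range phiEven := by
  intro x hx
  rw [Function.mem_support, ge] at hx
  split at hx
  · obtain ⟨⟨k, hk⟩, ⟨l, hl⟩⟩ := ‹Even x.1.1 ∧ Even x.1.2›
    have hx2 := x.2
    refine ⟨⟨(k, l), by omega⟩, ?_⟩
    apply Subtype.ext
    apply Prod.ext <;> simp only [phiEven] <;> omega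
  · exact absurd rfl hx

lemma go_comp (a b : ℕ) (p : S) :
    go a b (phiOdd p) =
      1 / (((2 * p.1.1 - 1 : ℕ) : ℝ) ^ a * ((2 * p.1.2 - 1 : ℕ) : ℝ) ^ b) := by
  have h := p.2
  have h1 : Odd (phiOdd p).1.1 := by simp only [phiOdd]; exact Nat.odd_iff.2 (by omega)
  have h2 : Odd (phiOdd p).1.2 := by simp only [phiOdd]; exact Nat.odd_iff.2 (by omega)
  rw [go, if_pos ⟨h1, h2⟩]
  rfl

lemma ge_comp (a b : ℕ) (p : S) :
    ge a b (phiEven p) = (2 : ℝ) ^ (-(a : ℤ) - (b : ℤ)) * fz a b p := by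
  have h := p.2
  have hm : (0 : ℝ) < (p.1.1 : ℝ) := by exact_mod_cast h.1
  have hn : (0 : ℝ) < (p.1.2 : ℝ) := by exact_mod_cast lt_trans h.1 h.2
  rw [ge, if_pos ⟨even_two_mul _, even_two_mul _⟩]
  have h2 : (2 : ℝ) ^ (-(a : ℤ) - (b : ℤ)) = ((2 : ℝ) ^ a * (2 : ℝ) ^ b)⁻¹ := by
    rw [show -(a : ℤ) - (b : ℤ) = -((a + b : ℕ) : ℤ) by push_cast; ring,
      zpow_neg, zpow_natCast, pow_add]
  rw [h2]
  show (1 : ℝ) / (((2 * p.1.1 : ℕ) : ℝ) ^ a * ((2 * p.1.2 : ℕ) : ℝ) ^ b) = _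
  unfold fz
  push_cast
  rw [mul_pow, mul_pow]
  field_simp

lemma key_pointwise (a b : ℕ) (p : S) :
    (1 / 2) * ((-1 : ℝ) ^ p.1.1 * (-1 : ℝ) ^ p.1.2 / ((p.1.1 : ℝ) ^ a * (p.1.2 : ℝ) ^ b))
      + (1 / 2) * fz a b p = go a b p + ge a b p := by
  have hfz : fz a b p = 1 / ((p.1.1 : ℝ) ^ a * (p.1.2 : ℝ) ^ b) := rfl
  rcases Nat.even_or_odd p.1.1 with hm | hm <;> rcases Nat.even_or_odd p.1.2 with hn | hn
  · rw [go, if_neg (by simp [Nat.not_odd_iff_even.2 hm]), ge, if_pos ⟨hm, hn⟩,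
      hm.neg_one_pow, hn.neg_one_pow, hfz]
    ring
  · rw [go, if_neg (by simp [Nat.not_odd_iff_even.2 hm]), ge,
      if_neg (by simp [Nat.not_even_iff_odd.2 hn]), hm.neg_one_pow, hn.neg_one_pow, hfz]
    ring
  · rw [go, if_neg (by simp [Nat.not_odd_iff_even.2 hn]), ge,
      if_neg (by simp [Nat.not_even_iff_odd.2 hm]), hm.neg_one_pow, hn.neg_one_pow, hfz]
    ring
  · rw [go, if_pos ⟨hm, hn⟩, ge, if_neg (by simp [Nat.not_even_iff_odd.2 hm]),
      hm.neg_one_pow, hn.neg_one_pow, hfz]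
    ring

end DoubleTAux

open DoubleTAux in
theorem double_t_via_alternating (a b : ℕ) (ha : 2 ≤ a) (hb : 2 ≤ b) :
    doubleT a b = (1 / 2) * signedDoubleZeta (-1) (-1) a b + (1 / 2) * signedDoubleZeta 1 1 a b
      - (2 : ℝ) ^ (-(a : ℤ) - (b : ℤ)) * signedDoubleZeta 1 1 a b := by
  classical
  have hfz : Summable (fz a b) := summable_fz a b ha hb
  have hgo : Summable (go a b) := by
    refine Summable.of_nonneg_of_le (fun p => ?_) (fun p => ?_) hfz
    · unfold go; split
      · exact fz_nonneg a b p
      · exact le_refl 0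
    · unfold go; split
      · exact le_refl _
      · exact fz_nonneg a b p
  have hge : Summable (ge a b) := by
    refine Summable.of_nonneg_of_le (fun p => ?_) (fun p => ?_) hfz
    · unfold ge; split
      · exact fz_nonneg a b p
      · exact le_refl 0
    · unfold ge; split
      · exact le_refl _
      · exact fz_nonneg a b p
  have habs : (fun p : S => |(-1 : ℝ) ^ p.1.1 * (-1 : ℝ) ^ p.1.2
      / ((p.1.1 : ℝ) ^ a * (p.1.2 : ℝ) ^ b)|) = fz a b := by
    funext p
    have hd : (0 : ℝ) ≤ (p.1.1 : ℝ) ^ a * (p.1.2 : ℝ) ^ b := by positivity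
    rw [abs_div, abs_mul, abs_pow, abs_pow, abs_neg, abs_one, one_pow, one_pow,
      one_mul, abs_of_nonneg hd]
    rfl
  have hneg : Summable (fun p : S => (-1 : ℝ) ^ p.1.1 * (-1 : ℝ) ^ p.1.2
      / ((p.1.1 : ℝ) ^ a * (p.1.2 : ℝ) ^ b)) :=
    Summable.of_abs (habs ▸ hfz)
  -- doubleT = ∑' go
  have hdT : doubleT a b = ∑' p : S, go a b p := by
    rw [doubleT, ← phiOdd_inj.tsum_eq (go_support a b)]
    exact tsum_congr fun p => (go_comp a b p).symm
  -- signedDoubleZeta 1 1 = ∑' fz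
  have hT1 : signedDoubleZeta 1 1 a b = ∑' p : S, fz a b p := by
    rw [signedDoubleZeta]
    exact tsum_congr fun p => by rw [fz, one_pow, one_pow, one_mul]
  -- ∑' ge = 2^(-a-b) * signedDoubleZeta 1 1
  have hE : ∑' p : S, ge a b p = (2 : ℝ) ^ (-(a : ℤ) - (b : ℤ)) * signedDoubleZeta 1 1 a b := by
    rw [← phiEven_inj.tsum_eq (ge_support a b), hT1,
      tsum_congr fun p => ge_comp a b p, tsum_mul_left]
  -- split the average
  have hsplit : (1 / 2) * signedDoubleZeta (-1) (-1) a b + (1 / 2) * signedDoubleZeta 1 1 a b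
      = ∑' p : S, go a b p + ∑' p : S, ge a b p := by
    rw [← Summable.tsum_add hgo hge, ← tsum_congr fun p => key_pointwise a b p,
      Summable.tsum_add (hneg.mul_left _) (hfz.mul_left _), tsum_mul_left, tsum_mul_left,
      ← hT1, signedDoubleZeta]
  rw [hdT, hsplit, hE]
  ring
end

section
/- Let q⋆(x₁,x₂,x₃) ∈ ℚ[x₁,x₂,x₃] be the component of a polynomial q(x₁,x₂,x₃) that is odd in x₁, odd in x₃, and even in x₂, namely q⋆ = (1/4)(q(x₁,x₂,x₃) − q(−x₁,x₂,x₃) − q(x₁,x₂,−x₃) + q(−x₁,x₂,−x₃)). If q is homogeneous of degree 2n, satisfies q(x₁,x₂,x₃) = q(x₂,x₃,x₁) = −q(x₃,x₂,x₁), and its totally even part vanishes, then q(x₁,x₂,x₃) = q⋆(x₁,x₂,x₃) + q⋆(x₂,x₃,x₁) + q⋆(x₃,x₁,x₂). -/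
open MvPolynomial

private lemma coeff_scaleVars (s : Fin 3 → ℚ) (q : MvPolynomial (Fin 3) ℚ) (d : Fin 3 →₀ ℕ) :
    coeff d (aeval (fun i => C (s i) * X i) q) = (∏ i, s i ^ d i) * coeff d q := by
  induction q using MvPolynomial.induction_on' with
  | add p q hp hq => simp only [map_add, coeff_add, hp, hq, mul_add]
  | monomial u a =>
    have key : aeval (fun i => C (s i) * X i) (monomial u a)
        = C (∏ i ∈ u.support, s i ^ u i) * monomial u a := by
      rw [aeval_monomial, monomial_eq]
      rw [show (u.prod fun i k => (C (s i) * X i) ^ k)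
          = (u.prod fun i k => C (s i ^ k)) * (u.prod fun i k => X i ^ k) by
        rw [← Finsupp.prod_mul]; congr 1; funext i k; rw [mul_pow, C_pow]]
      rw [show (u.prod fun i k => (C (s i ^ k) : MvPolynomial (Fin 3) ℚ))
          = C (∏ i ∈ u.support, s i ^ u i) by
        rw [Finsupp.prod, map_prod]]
      push_cast [algebraMap_eq]
      ring
    rw [key, coeff_C_mul, coeff_monomial]
    by_cases h : u = d
    · subst h
      simp only [if_pos rfl]
      rw [Finset.prod_subset (Finset.subset_univ u.support) (fun i _ hi => by
        rw [Finsupp.notMem_support_iff.mp hi, pow_zero])]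
    · simp [h]

/-- The component of `q` odd in x₁, even in x₂, odd in x₃. -/
noncomputable def oddOddPart (q : MvPolynomial (Fin 3) ℚ) : MvPolynomial (Fin 3) ℚ :=
  (1 / 4 : ℚ) • (q - aeval ![-X 0, X 1, X 2] q - aeval ![X 0, X 1, -X 2] q
    + aeval ![-X 0, X 1, -X 2] q)

private lemma coeff_flipA (q : MvPolynomial (Fin 3) ℚ) (d : Fin 3 →₀ ℕ) :
    coeff d (aeval ![-X 0, X 1, X 2] q) = (-1 : ℚ) ^ (d 0) * coeff d q := by
  have h : (![-X 0, X 1, X 2] : Fin 3 → MvPolynomial (Fin 3) ℚ)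
      = fun i => C (![(-1 : ℚ), 1, 1] i) * X i := by
    funext i; fin_cases i <;> simp
  rw [h, coeff_scaleVars, Fin.prod_univ_three]
  simp

private lemma coeff_flipB (q : MvPolynomial (Fin 3) ℚ) (d : Fin 3 →₀ ℕ) :
    coeff d (aeval ![X 0, X 1, -X 2] q) = (-1 : ℚ) ^ (d 2) * coeff d q := by
  have h : (![X 0, X 1, -X 2] : Fin 3 → MvPolynomial (Fin 3) ℚ)
      = fun i => C (![(1 : ℚ), 1, -1] i) * X i := by
    funext i; fin_cases i <;> simp
  rw [h, coeff_scaleVars, Fin.prod_univ_three]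
  simp

private lemma coeff_flipC (q : MvPolynomial (Fin 3) ℚ) (d : Fin 3 →₀ ℕ) :
    coeff d (aeval ![-X 0, X 1, -X 2] q) = (-1 : ℚ) ^ (d 0) * (-1 : ℚ) ^ (d 2) * coeff d q := by
  have h : (![-X 0, X 1, -X 2] : Fin 3 → MvPolynomial (Fin 3) ℚ)
      = fun i => C (![(-1 : ℚ), 1, -1] i) * X i := by
    funext i; fin_cases i <;> simp
  rw [h, coeff_scaleVars, Fin.prod_univ_three]
  simp [mul_comm, mul_assoc, mul_left_comm]

private lemma coeff_oddOddPart (q : MvPolynomial (Fin 3) ℚ) (d : Fin 3 →₀ ℕ) :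
    coeff d (oddOddPart q)
      = (if Odd (d 0) ∧ Odd (d 2) then 1 else 0) * coeff d q := by
  rw [oddOddPart, coeff_smul, coeff_add, coeff_sub, coeff_sub, coeff_flipA, coeff_flipB,
    coeff_flipC]
  rcases Nat.even_or_odd (d 0) with h0 | h0 <;> rcases Nat.even_or_odd (d 2) with h2 | h2 <;>
    simp [h0, h2, h0.neg_one_pow, h2.neg_one_pow, Nat.not_odd_iff_even.mpr,
      Nat.not_even_iff_odd.mpr, smul_eq_mul] <;> ring

private def cyc3 : Fin 3 ≃ Fin 3 :=
  ⟨![1, 2, 0], ![2, 0, 1], by decide, by decide⟩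

private lemma aeval_cyc3 (p : MvPolynomial (Fin 3) ℚ) :
    aeval ![X 1, X 2, X 0] p = rename (cyc3 : Fin 3 → Fin 3) p := by
  have h : (aeval ![X 1, X 2, X 0] : MvPolynomial (Fin 3) ℚ →ₐ[ℚ] MvPolynomial (Fin 3) ℚ)
      = rename (cyc3 : Fin 3 → Fin 3) := by
    apply MvPolynomial.algHom_ext
    intro i
    fin_cases i <;> simp [cyc3, rename_X]
  exact AlgHom.congr_fun h p

private lemma aeval_cyc3' (p : MvPolynomial (Fin 3) ℚ) :
    aeval ![X 2, X 0, X 1] p = rename (cyc3.symm : Fin 3 → Fin 3) p := by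
  have h : (aeval ![X 2, X 0, X 1] : MvPolynomial (Fin 3) ℚ →ₐ[ℚ] MvPolynomial (Fin 3) ℚ)
      = rename (cyc3.symm : Fin 3 → Fin 3) := by
    apply MvPolynomial.algHom_ext
    intro i
    fin_cases i <;> simp [cyc3, rename_X, Equiv.symm] <;> rfl
  exact AlgHom.congr_fun h p

private lemma coeff_rename_equiv (e : Fin 3 ≃ Fin 3) (p : MvPolynomial (Fin 3) ℚ)
    (d : Fin 3 →₀ ℕ) :
    coeff d (rename (e : Fin 3 → Fin 3) p) = coeff (Finsupp.equivMapDomain e.symm d) p := by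
  have h := coeff_rename_mapDomain (e : Fin 3 → Fin 3) e.injective p
    (Finsupp.equivMapDomain e.symm d)
  rw [← h]
  congr 1
  rw [← Finsupp.equivMapDomain_eq_mapDomain]
  ext i
  simp [Finsupp.equivMapDomain_apply]

theorem cyclic_decomposition_via_star_part (n : ℕ) (q : MvPolynomial (Fin 3) ℚ)
    (hhom : q.IsHomogeneous (2 * n))
    (hcyc : aeval ![X 1, X 2, X 0] q = q)
    (hrev : aeval ![X 2, X 1, X 0] q = -q)
    (heven : ∀ d : Fin 3 →₀ ℕ, (∀ i, Even (d i)) → coeff d q = 0) :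
    q = oddOddPart q + aeval ![X 1, X 2, X 0] (oddOddPart q)
        + aeval ![X 2, X 0, X 1] (oddOddPart q) := by
  have hinv : ∀ u : Fin 3 →₀ ℕ, coeff (Finsupp.equivMapDomain cyc3.symm u) q = coeff u q := by
    intro u
    conv_rhs => rw [← hcyc]
    rw [aeval_cyc3, coeff_rename_equiv]
  have hinv2 : ∀ u : Fin 3 →₀ ℕ, coeff (Finsupp.equivMapDomain cyc3 u) q = coeff u q := by
    intro u
    have h := hinv (Finsupp.equivMapDomain cyc3 u)
    rw [show Finsupp.equivMapDomain cyc3.symm (Finsupp.equivMapDomain cyc3 u) = u by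
      ext i; simp [Finsupp.equivMapDomain_apply]] at h
    exact h.symm
  apply MvPolynomial.ext
  intro d
  rw [coeff_add, coeff_add, aeval_cyc3, aeval_cyc3', coeff_rename_equiv, coeff_rename_equiv,
    Equiv.symm_symm, coeff_oddOddPart, coeff_oddOddPart, coeff_oddOddPart, hinv, hinv2]
  have eA0 : (Finsupp.equivMapDomain cyc3.symm d) 0 = d 1 := by
    rw [Finsupp.equivMapDomain_apply]; rfl
  have eA2 : (Finsupp.equivMapDomain cyc3.symm d) 2 = d 0 := by
    rw [Finsupp.equivMapDomain_apply]; rfl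
  have eB0 : (Finsupp.equivMapDomain cyc3 d) 0 = d 2 := by
    rw [Finsupp.equivMapDomain_apply]; rfl
  have eB2 : (Finsupp.equivMapDomain cyc3 d) 2 = d 1 := by
    rw [Finsupp.equivMapDomain_apply]; rfl
  rw [eA0, eA2, eB0, eB2]
  by_cases hq0 : coeff d q = 0
  · rw [hq0]; ring
  · have hdeg : d.degree = 2 * n := by
      by_contra h
      exact hq0 (hhom.coeff_eq_zero h)
    have hsum : Even (d 0 + d 1 + d 2) := by
      have h1 : d.degree = ∑ i : Fin 3, d i := by
        rw [Finsupp.degree]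
        refine Finset.sum_subset (Finset.subset_univ _) ?_
        intro i _ hi
        exact Finsupp.notMem_support_iff.mp hi
      rw [h1, Fin.sum_univ_three] at hdeg
      exact hdeg ▸ (even_two_mul n)
    have hne : ¬ (Even (d 0) ∧ Even (d 1) ∧ Even (d 2)) := by
      intro ⟨h0, h1, h2⟩
      exact hq0 (heven d (fun i => by fin_cases i <;> assumption))
    rcases Nat.even_or_odd (d 0) with h0 | h0 <;> rcases Nat.even_or_odd (d 1) with h1 | h1 <;>
      rcases Nat.even_or_odd (d 2) with h2 | h2
    · exact absurd ⟨h0, h1, h2⟩ hne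
    · exfalso; simp only [Nat.even_iff, Nat.odd_iff] at h0 h1 h2 hsum; omega
    · exfalso; simp only [Nat.even_iff, Nat.odd_iff] at h0 h1 h2 hsum; omega
    · simp [Nat.not_odd_iff_even.mpr h0, h1, h2]
    · exfalso; simp only [Nat.even_iff, Nat.odd_iff] at h0 h1 h2 hsum; omega
    · simp [h0, Nat.not_odd_iff_even.mpr h1, h2]
    · simp [h0, h1, Nat.not_odd_iff_even.mpr h2]
    · exfalso; simp only [Nat.even_iff, Nat.odd_iff] at h0 h1 h2 hsum; omega
end

section
/- The shuffle regularization formula: for positive integers k₁,…,k_d (with k_d ≥ 2) and ℓ ≥ 0, the regularized value with ℓ leading zeros satisfies ζ_ℓ(k₁,…,k_d) = (−1)^ℓ ∑_{i₁+⋯+i_d=ℓ, i_j≥0} C(k₁+i₁−1, i₁)⋯C(k_d+i_d−1, i_d) ζ(k₁+i₁,…,k_d+i_d), interpreted as an identity of iterated integrals: the word 0^ℓ e_{k₁}⋯e_{k_d} equals (−1)^ℓ times the stated sum of words under the shuffle-regularization map. -/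
/-- The shuffle product of two words, as a multiset of words. -/
def shuffles : List Bool → List Bool → Multiset (List Bool)
  | [], ys => {ys}
  | x :: xs, [] => {x :: xs}
  | x :: xs, y :: ys =>
      (shuffles xs (y :: ys)).map (x :: ·) + (shuffles (x :: xs) ys).map (y :: ·)
termination_by u v => u.length + v.length

/-- The word 0^ℓ e_{k₁} ⋯ e_{k_d}, with e_k = 1 0^{k-1}; `true` is the letter 1 and
`false` the letter 0. -/
def zetaWord {d : ℕ} (ℓ : ℕ) (k : Fin d → ℕ) : List Bool :=
  List.replicate ℓ false ++ (List.ofFn fun j => true :: List.replicate (k j - 1) false).flatten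

lemma shuffles_single (x : Bool) : ∀ v : List Bool,
    shuffles [x] v = {x :: v} + (match v with
      | [] => 0
      | y :: ys => (shuffles [x] ys).map (y :: ·)) := by
  intro v
  match v with
  | [] => simp [shuffles]
  | y :: ys => rw [shuffles]; simp [shuffles]

lemma shuffles_single_cons (x y : Bool) (ys : List Bool) :
    shuffles [x] (y :: ys) = {x :: y :: ys} + (shuffles [x] ys).map (y :: ·) := by
  rw [shuffles]; simp [shuffles]

lemma shufRep (w : List Bool) : ∀ m : ℕ,
    shuffles [false] (List.replicate m false ++ w)
      = m • ({List.replicate (m+1) false ++ w} : Multiset (List Bool))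
        + (shuffles [false] w).map (List.replicate m false ++ ·) := by
  intro m
  induction m with
  | zero => simp
  | succ m ih =>
    have h1 : List.replicate (m+1) false ++ w = false :: (List.replicate m false ++ w) := by
      simp [List.replicate_succ]
    rw [h1, shuffles_single_cons, ih, Multiset.map_add, Multiset.map_nsmul]
    simp only [Multiset.map_singleton, Multiset.map_map]
    have h2 : false :: (List.replicate (m+1) false ++ w) = List.replicate (m+2) false ++ w := by
      simp [List.replicate_succ]
    have h3 : ((false :: ·) ∘ (List.replicate m false ++ ·) : List Bool → List Bool)
        = (List.replicate (m+1) false ++ ·) := by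
      funext t; simp [List.replicate_succ]
    rw [h2, h3, succ_nsmul]
    have h4 : false :: false :: (List.replicate m false ++ w)
        = List.replicate (m + 2) false ++ w := by
      simp [List.replicate_succ]
    rw [h4]; abel



lemma multiset_map_finsetSum {ι α β : Type*} (s : Finset ι) (f : ι → Multiset α) (g : α → β) :
    (∑ i ∈ s, f i).map g = ∑ i ∈ s, (f i).map g := by
  classical
  induction s using Finset.induction with
  | empty => simp
  | insert _ _ ha ih => rw [Finset.sum_insert ha, Multiset.map_add, ih, Finset.sum_insert ha]

def blocksFn {n : ℕ} (k : Fin n → ℕ) : List Bool :=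
  (List.ofFn fun j => true :: List.replicate (k j - 1) false).flatten

lemma S_blocks : ∀ (n : ℕ) (k : Fin n → ℕ), (∀ j, 1 ≤ k j) →
    shuffles [false] (blocksFn k)
      = {false :: blocksFn k}
        + ∑ m : Fin n, (k m) •
            ({blocksFn (fun j => k j + if j = m then 1 else 0)} : Multiset (List Bool)) := by
  intro n
  induction n with
  | zero =>
    intro k _
    simp [blocksFn, shuffles]
  | succ n ih =>
    intro k hk
    have hB : blocksFn k
        = true :: (List.replicate (k 0 - 1) false ++ blocksFn (fun i : Fin n => k i.succ)) := by
      simp [blocksFn, List.ofFn_succ]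
    rw [hB, shuffles_single_cons, shufRep, ih (fun i => k i.succ) (fun i => hk i.succ)]
    rw [Fin.sum_univ_succ]
    simp only [Multiset.map_add, Multiset.map_nsmul, Multiset.map_singleton, Multiset.map_map,
      multiset_map_finsetSum]
    have hk0 : k 0 - 1 + 1 = k 0 := Nat.succ_pred_eq_of_pos (hk 0)
    have e1 : List.replicate (k 0 - 1) false ++ false :: blocksFn (fun i : Fin n => k i.succ)
        = List.replicate (k 0 - 1 + 1) false ++ blocksFn (fun i : Fin n => k i.succ) := by
      simp [List.replicate_succ']
    have e2 : (blocksFn fun j : Fin (n+1) => k j + if j = 0 then 1 else 0)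
        = true :: (List.replicate (k 0 - 1 + 1) false
            ++ blocksFn fun i : Fin n => k i.succ) := by
      simp [blocksFn, List.ofFn_succ, hk0, Fin.succ_ne_zero]
    have e3 : ∀ x : Fin n, (blocksFn fun j : Fin (n+1) => k j + if j = x.succ then 1 else 0)
        = true :: (List.replicate (k 0 - 1) false
            ++ blocksFn fun j : Fin n => k j.succ + if j = x then 1 else 0) := by
      intro x
      have h0x : (0 : Fin (n+1)) ≠ x.succ := (Fin.succ_ne_zero x).symm
      simp [blocksFn, List.ofFn_succ, Fin.succ_inj, h0x]
    rw [e1, e2]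
    simp only [e3]
    have : ∀ (A S2 : Multiset (List Bool)), (k 0 - 1) • A + (A + S2) = k 0 • A + S2 := by
      intro A S2
      obtain ⟨c, hc⟩ : ∃ c, k 0 = c + 1 := ⟨k 0 - 1, hk0.symm⟩
      rw [hc, Nat.add_sub_cancel, add_nsmul, one_nsmul]
      exact (add_assoc _ _ _).symm
    rw [this]



lemma zetaWord_eq (n ℓ : ℕ) (k : Fin n → ℕ) :
    zetaWord ℓ k = List.replicate ℓ false ++ blocksFn k := rfl

lemma S_zeta (n ℓ : ℕ) (k : Fin n → ℕ) (hk : ∀ j, 1 ≤ k j) :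
    shuffles [false] (zetaWord ℓ k)
      = (ℓ + 1) • ({zetaWord (ℓ+1) k} : Multiset (List Bool))
        + ∑ m : Fin n, (k m) •
            ({zetaWord ℓ (fun j => k j + if j = m then 1 else 0)} : Multiset (List Bool)) := by
  rw [zetaWord_eq, shufRep, S_blocks n k hk]
  simp only [Multiset.map_add, Multiset.map_nsmul, Multiset.map_singleton, multiset_map_finsetSum]
  have e1 : List.replicate ℓ false ++ false :: blocksFn k
      = List.replicate (ℓ+1) false ++ blocksFn k := by simp [List.replicate_succ']
  rw [e1, ← zetaWord_eq n (ℓ+1) k, succ_nsmul]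
  simp only [← zetaWord_eq]
  abel

lemma sum_finsetSum {ι α : Type*} [AddCommMonoid α] (s : Finset ι) (f : ι → Multiset α) :
    (∑ i ∈ s, f i).sum = ∑ i ∈ s, (f i).sum := by
  classical
  induction s using Finset.induction with
  | empty => simp
  | insert _ _ ha ih => rw [Finset.sum_insert ha, Multiset.sum_add, ih, Finset.sum_insert ha]

lemma Zrec (n : ℕ) (Z : List Bool → ℝ)
    (hmul : ∀ u v, Z u * Z v = ((shuffles u v).map Z).sum) (h0 : Z [false] = 0)
    (ℓ : ℕ) (k : Fin n → ℕ) (hk : ∀ j, 1 ≤ k j) :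
    ((ℓ : ℝ) + 1) * Z (zetaWord (ℓ+1) k)
      = - ∑ m : Fin n, (k m : ℝ) * Z (zetaWord ℓ (fun j => k j + if j = m then 1 else 0)) := by
  have h := hmul [false] (zetaWord ℓ k)
  rw [h0, zero_mul, S_zeta n ℓ k hk] at h
  rw [Multiset.map_add, Multiset.sum_add, Multiset.map_nsmul, Multiset.sum_nsmul,
    multiset_map_finsetSum, sum_finsetSum] at h
  simp only [Multiset.map_singleton, Multiset.map_nsmul, Multiset.sum_singleton,
    Multiset.sum_nsmul, nsmul_eq_mul] at h
  push_cast at h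
  linarith [h]



lemma beta_if_helper {α : Type*} [DecidableEq α] (m : α) (a b : ℕ) :
    (if m = m then a else b) = a := if_pos rfl

open Finset Finset.Nat in
lemma stepM (n : ℕ) (Z : List Bool → ℝ) (ℓ : ℕ) (k : Fin n → ℕ)
    (m : Fin n) :
    ∑ i' ∈ antidiagonalTuple n ℓ,
        (k m : ℝ) * ((∏ j, (((k j + if j = m then 1 else 0) + i' j - 1).choose (i' j) : ℝ))
          * Z (zetaWord 0 (fun j => (k j + if j = m then 1 else 0) + i' j)))
      = ∑ i ∈ antidiagonalTuple n (ℓ+1),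
          (i m : ℝ) * ((∏ j, ((k j + i j - 1).choose (i j) : ℝ))
            * Z (zetaWord 0 (fun j => k j + i j))) := by
  classical
  have hfil : ∑ i ∈ antidiagonalTuple n (ℓ+1),
        (i m : ℝ) * ((∏ j, ((k j + i j - 1).choose (i j) : ℝ))
          * Z (zetaWord 0 (fun j => k j + i j)))
      = ∑ i ∈ (antidiagonalTuple n (ℓ+1)).filter (fun i => i m ≠ 0),
          (i m : ℝ) * ((∏ j, ((k j + i j - 1).choose (i j) : ℝ))
            * Z (zetaWord 0 (fun j => k j + i j))) := by
    refine (Finset.sum_filter_of_ne ?_).symm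
    intro x _ hx hm
    exact hx (by rw [hm]; push_cast; ring)
  rw [hfil]
  apply Finset.sum_nbij' (i := fun i' => fun j => i' j + if j = m then 1 else 0)
    (j := fun i => fun j => i j - if j = m then 1 else 0)
  · intro i' hi'
    rw [mem_antidiagonalTuple] at hi'
    rw [Finset.mem_filter, mem_antidiagonalTuple]
    refine ⟨?_, by simp⟩
    rw [Finset.sum_add_distrib, hi']
    simp
  · intro i hi
    rw [Finset.mem_filter, mem_antidiagonalTuple] at hi
    obtain ⟨hsum, hm⟩ := hi
    rw [mem_antidiagonalTuple]
    rw [← Finset.add_sum_erase _ _ (Finset.mem_univ m)] at hsum ⊢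
    have he : ∑ j ∈ Finset.univ.erase m, (i j - if j = m then 1 else 0)
        = ∑ j ∈ Finset.univ.erase m, i j :=
      Finset.sum_congr rfl fun j hj => by simp [Finset.ne_of_mem_erase hj]
    rw [he]
    simp only [if_pos rfl, ite_true]
    omega
  · intro i' _
    funext j
    by_cases h : j = m <;> simp [h]
  · intro i hi
    rw [Finset.mem_filter] at hi
    funext j
    by_cases h : j = m
    · subst h; simp; omega
    · simp [h]
  · intro i' hi'
    have hZ : (fun j => (k j + if j = m then 1 else 0) + i' j)
        = fun j => k j + (i' j + if j = m then 1 else 0) := by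
      funext j; by_cases h : j = m <;> simp [h] <;> omega
    have hmm : (if m = m then 1 else 0) = 1 := if_pos rfl
    have hnat : k m * ∏ j, ((k j + if j = m then 1 else 0) + i' j - 1).choose (i' j)
        = (i' m + 1) * ∏ j, (k j + (i' j + if j = m then 1 else 0) - 1).choose
            (i' j + if j = m then 1 else 0) := by
      rw [← Finset.mul_prod_erase _ _ (Finset.mem_univ m),
        ← Finset.mul_prod_erase _ (fun j => (k j + (i' j + if j = m then 1 else 0) - 1).choose
            (i' j + if j = m then 1 else 0)) (Finset.mem_univ m)]
      have he : ∏ j ∈ Finset.univ.erase m,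
            ((k j + if j = m then 1 else 0) + i' j - 1).choose (i' j)
          = ∏ j ∈ Finset.univ.erase m, (k j + (i' j + if j = m then 1 else 0) - 1).choose
            (i' j + if j = m then 1 else 0) :=
        Finset.prod_congr rfl fun j hj => by simp [Finset.ne_of_mem_erase hj]
      rw [he, ← mul_assoc, ← mul_assoc]
      congr 1
      rw [hmm]
      have h1 : (k m + 1) + i' m - 1 = k m + i' m := by omega
      have h2 : k m + (i' m + 1) - 1 = k m + i' m := by omega
      rw [h1, h2]
      have h3 := Nat.choose_succ_right_eq (k m + i' m) (i' m)
      have h4 : k m + i' m - i' m = k m := by omega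
      rw [h4] at h3
      calc k m * (k m + i' m).choose (i' m)
          = (k m + i' m).choose (i' m) * k m := mul_comm _ _
        _ = (k m + i' m).choose (i' m + 1) * (i' m + 1) := h3.symm
        _ = (i' m + 1) * (k m + i' m).choose (i' m + 1) := mul_comm _ _
    beta_reduce
    rw [hZ]
    simp only [beta_if_helper]
    rw [← mul_assoc, ← mul_assoc]
    congr 1
    exact_mod_cast congrArg (Nat.cast (R := ℝ)) hnat

open Finset Finset.Nat in
lemma mainLemma (n : ℕ) (Z : List Bool → ℝ)
    (hmul : ∀ u v, Z u * Z v = ((shuffles u v).map Z).sum) (h0 : Z [false] = 0) :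
    ∀ (ℓ : ℕ) (k : Fin n → ℕ), (∀ j, 1 ≤ k j) →
    Z (zetaWord ℓ k) = (-1 : ℝ) ^ ℓ * ∑ i ∈ antidiagonalTuple n ℓ,
        (∏ j, ((k j + i j - 1).choose (i j) : ℝ)) * Z (zetaWord 0 fun j => k j + i j) := by
  intro ℓ
  induction ℓ with
  | zero =>
    intro k hk
    rw [Finset.Nat.antidiagonalTuple_zero_right, Finset.sum_singleton]
    simp
  | succ ℓ ih =>
    intro k hk
    have hc : ((ℓ : ℝ) + 1) ≠ 0 := by positivity
    apply mul_left_cancel₀ hc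
    rw [Zrec n Z hmul h0 ℓ k hk]
    have hih : ∀ m : Fin n, Z (zetaWord ℓ fun j => k j + if j = m then 1 else 0)
        = (-1:ℝ)^ℓ * ∑ i' ∈ antidiagonalTuple n ℓ,
            (∏ j, (((k j + if j = m then 1 else 0) + i' j - 1).choose (i' j) : ℝ))
              * Z (zetaWord 0 fun j => (k j + if j = m then 1 else 0) + i' j) := fun m =>
      ih (fun j => k j + if j = m then 1 else 0)
        (fun j => le_trans (hk j) (Nat.le_add_right _ _))
    simp only [hih]
    have key : ∑ m : Fin n, (k m : ℝ) * (∑ i' ∈ antidiagonalTuple n ℓ,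
            (∏ j, (((k j + if j = m then 1 else 0) + i' j - 1).choose (i' j) : ℝ))
              * Z (zetaWord 0 fun j => (k j + if j = m then 1 else 0) + i' j))
        = ((ℓ:ℝ)+1) * ∑ i ∈ antidiagonalTuple n (ℓ+1),
            (∏ j, ((k j + i j - 1).choose (i j) : ℝ)) * Z (zetaWord 0 fun j => k j + i j) := by
      have e1 : ∀ m : Fin n, (k m : ℝ) * (∑ i' ∈ antidiagonalTuple n ℓ,
            (∏ j, (((k j + if j = m then 1 else 0) + i' j - 1).choose (i' j) : ℝ))
              * Z (zetaWord 0 fun j => (k j + if j = m then 1 else 0) + i' j))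
          = ∑ i ∈ antidiagonalTuple n (ℓ+1), (i m : ℝ) *
              ((∏ j, ((k j + i j - 1).choose (i j) : ℝ)) * Z (zetaWord 0 fun j => k j + i j)) := by
        intro m
        rw [Finset.mul_sum]
        exact stepM n Z ℓ k m
      rw [Finset.sum_congr rfl (fun m _ => e1 m), Finset.sum_comm, Finset.mul_sum]
      refine Finset.sum_congr rfl fun i hi => ?_
      rw [← Finset.sum_mul]
      congr 1
      rw [mem_antidiagonalTuple] at hi
      rw [← Nat.cast_sum, hi]
      push_cast
      ring
    have lift : ∀ (a F : Fin n → ℝ),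
        ∑ m, a m * ((-1:ℝ)^ℓ * F m) = (-1:ℝ)^ℓ * ∑ m, a m * F m := by
      intro a F
      rw [Finset.mul_sum]
      exact Finset.sum_congr rfl fun m _ => by ring
    rw [lift, key]
    ring

/-- Shuffle regularization formula: if `Z` is multiplicative with respect to the shuffle
product and vanishes on the single-letter words (the T = 0 shuffle regularization),
then ζ_ℓ(k₁,…,k_d) = (−1)^ℓ ∑_{i₁+⋯+i_d=ℓ} ∏_j C(k_j+i_j−1, i_j) ζ(k₁+i₁,…,k_d+i_d). -/
theorem shuffle_regularization_formula (d ℓ : ℕ) (k : Fin (d + 1) → ℕ)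
    (hk : ∀ j, 1 ≤ k j) (hlast : 2 ≤ k (Fin.last d))
    (Z : List Bool → ℝ)
    (hmul : ∀ u v, Z u * Z v = ((shuffles u v).map Z).sum)
    (h0 : Z [false] = 0) (h1 : Z [true] = 0) :
    Z (zetaWord ℓ k)
      = (-1 : ℝ) ^ ℓ * ∑ i ∈ Finset.Nat.antidiagonalTuple (d + 1) ℓ,
          (∏ j, ((k j + i j - 1).choose (i j) : ℝ)) * Z (zetaWord 0 (fun j => k j + i j)) := by
  exact mainLemma (d + 1) Z hmul h0 ℓ k hk
end
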